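/- arXiv:1406.4428 — 7 statements merged into one kernel-verified Lean document; each statement's English description precedes it below -/
import Mathlib

section
/- Let n ≥ 1 and let θ₀,…,θ_{2n+1} ∈ 𝕋ⁿ be points such that for each i ∈ {1,…,n} the circle coordinates θ₀ⁱ, θ₁ⁱ, …, θ_{2n+1}ⁱ are pairwise distinct. Then Σ_{j=0}^{2n+1} (−1)^j C(θ₀, …, θ̂_j, …, θ_{2n+1}) = 0, where θ̂_j means that the argument θ_j is omitted; that is, C is closed as a combinatorial cochain. -/
open MeasureTheory Real
open scoped Real

noncomputable section

instance : Fact (0 < 2 * π) := ⟨by positivity⟩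

/-- The circle `S¹ = ℝ/2πℤ`. -/
abbrev Circle2pi := AddCircle (2 * π)

/-- The orientation cocycle `e` on the circle: `1` on strictly positively
cyclically ordered triples, `-1` otherwise. -/
def eCocycle (a b c : Circle2pi) : ℝ :=
  letI := Classical.dec (sbtw a b c)
  if sbtw a b c then 1 else -1

/-- The normalized Haar probability measure on the circle. -/
abbrev circleMeasure : Measure Circle2pi := AddCircle.haarAddCircle

/-- The `n`-torus `𝕋ⁿ`. -/
abbrev Torus (n : ℕ) := Fin n → Circle2pi

/-- The product probability measure on the `n`-torus. -/
abbrev torusMeasure (n : ℕ) : Measure (Torus n) := Measure.pi fun _ => circleMeasure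

/-- The cocycle `C` on `(𝕋ⁿ)^(2n+1)` (indices `0, …, 2n`; the `i`-th Euler class,
for `i = 0, …, n-1` (0-indexed), uses positions `2i, 2i+1, 2i+2`). -/
def Ccocycle (n : ℕ) (θ : Fin (2 * n + 1) → Torus n) : ℝ :=
  (1 / (2 * n + 1).factorial : ℝ) *
    ∑ σ : Equiv.Perm (Fin (2 * n + 1)), ((Equiv.Perm.sign σ : ℤ) : ℝ) *
      ∏ i : Fin n,
        eCocycle (θ (σ ⟨2 * i.1, by have := i.2; omega⟩) i)
          (θ (σ ⟨2 * i.1 + 1, by have := i.2; omega⟩) i)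
          (θ (σ ⟨2 * i.1 + 2, by have := i.2; omega⟩) i)

/-!
`C` is the alternation of the cup product `e₁ ∪ ⋯ ∪ eₙ`, where `eᵢ` is the orientation cocycle
of the `i`-th coordinate. A four-point check in the circular order shows that `eᵢ` satisfies the
cocycle identity on points with distinct `i`-th coordinates, and the Leibniz rule for the cup
product passes this on to `e₁ ∪ ⋯ ∪ eₙ`. Deleting a vertex and then permuting the remaining ones
is the same as permuting all vertices and deleting the first one; hence alternation commutes with
the coboundary up to the factor `2n + 2`. So `δC` vanishes wherever `δ(e₁ ∪ ⋯ ∪ eₙ)` vanishes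
at all reorderings of the points, and distinctness of coordinates is invariant under reordering.
-/

open Finset Equiv

section CircularOrder

variable {α : Type*} [CircularOrder α]

def cyclicOrientation (a b c : α) : ℝ :=
  letI := Classical.dec (sbtw a b c)
  if sbtw a b c then 1 else -1

lemma cyclicOrientation_of_sbtw {a b c : α} (h : sbtw a b c) : cyclicOrientation a b c = 1 :=
  if_pos h

lemma cyclicOrientation_of_sbtw_swap {a b c : α} (h : sbtw c b a) :
    cyclicOrientation a b c = -1 :=
  if_neg (sbtw_asymm h)

lemma sbtw_or_sbtw_swap {a b c : α} (hab : a ≠ b) (hbc : b ≠ c) (hca : c ≠ a) :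
    sbtw a b c ∨ sbtw c b a := by
  by_contra! h
  rw [sbtw_iff_not_btw, sbtw_iff_not_btw, not_not, not_not] at h
  rcases h.2.antisymm h.1 with h | h | h
  · exact hab h
  · exact hbc h
  · exact hca h

lemma sbtw_of_sbtw_of_sbtw {a b c d : α} (habc : sbtw a b c) (hacd : sbtw a c d) : sbtw b c d :=
  (hacd.cyclic_right.trans_left habc).cyclic_left

lemma cyclicOrientation_cocycle {a b c d : α} (hab : a ≠ b) (hac : a ≠ c) (had : a ≠ d)
    (hbc : b ≠ c) (hbd : b ≠ d) (hcd : c ≠ d) :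
    cyclicOrientation b c d - cyclicOrientation a c d + cyclicOrientation a b d
      - cyclicOrientation a b c = 0 := by
  rcases sbtw_or_sbtw_swap hab hbc hac.symm with habc | hcba <;>
  rcases sbtw_or_sbtw_swap hac hcd had.symm with hacd | hdca <;>
  rcases sbtw_or_sbtw_swap hab hbd had.symm with habd | hdba
  · rw [cyclicOrientation_of_sbtw (sbtw_of_sbtw_of_sbtw habc hacd),
      cyclicOrientation_of_sbtw hacd, cyclicOrientation_of_sbtw habd,
      cyclicOrientation_of_sbtw habc]
    norm_num
  · exact absurd hdba (sbtw_asymm (sbtw_trans_right habc hacd))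
  · rw [cyclicOrientation_of_sbtw_swap
        (sbtw_of_sbtw_of_sbtw habd hdca.cyclic_right).cyclic_left,
      cyclicOrientation_of_sbtw_swap hdca, cyclicOrientation_of_sbtw habd,
      cyclicOrientation_of_sbtw habc]
    norm_num
  · rw [cyclicOrientation_of_sbtw (sbtw_of_sbtw_of_sbtw hdba.cyclic_right habc).cyclic_left,
      cyclicOrientation_of_sbtw_swap hdca, cyclicOrientation_of_sbtw_swap hdba,
      cyclicOrientation_of_sbtw habc]
    norm_num
  · rw [cyclicOrientation_of_sbtw_swap
        (sbtw_of_sbtw_of_sbtw hcba.cyclic_right habd).cyclic_right,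
      cyclicOrientation_of_sbtw hacd, cyclicOrientation_of_sbtw habd,
      cyclicOrientation_of_sbtw_swap hcba]
    norm_num
  · rw [cyclicOrientation_of_sbtw (sbtw_of_sbtw_of_sbtw hacd hdba.cyclic_right).cyclic_right,
      cyclicOrientation_of_sbtw hacd, cyclicOrientation_of_sbtw_swap hdba,
      cyclicOrientation_of_sbtw_swap hcba]
    norm_num
  · exact absurd habd
      (sbtw_asymm (sbtw_trans_right hdca.cyclic_right hcba.cyclic_right).cyclic_left)
  · rw [cyclicOrientation_of_sbtw_swap
        (sbtw_of_sbtw_of_sbtw hdca.cyclic_right hcba.cyclic_right),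
      cyclicOrientation_of_sbtw_swap hdca, cyclicOrientation_of_sbtw_swap hdba,
      cyclicOrientation_of_sbtw_swap hcba]
    norm_num

end CircularOrder

namespace Fin

def insertPerm {m : ℕ} (p : Fin (m + 1)) (σ : Perm (Fin m)) : Perm (Fin (m + 1)) :=
  p.cycleRange.symm * Perm.decomposeFin.symm (0, σ)

@[simp] lemma insertPerm_zero {m : ℕ} (p : Fin (m + 1)) (σ : Perm (Fin m)) :
    insertPerm p σ 0 = p := by
  simp [insertPerm]

@[simp] lemma insertPerm_succ {m : ℕ} (p : Fin (m + 1)) (σ : Perm (Fin m)) (k : Fin m) :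
    insertPerm p σ k.succ = p.succAbove (σ k) := by
  simp [insertPerm]

lemma sign_insertPerm {m : ℕ} (p : Fin (m + 1)) (σ : Perm (Fin m)) :
    Perm.sign (insertPerm p σ) = (-1) ^ (p : ℕ) * Perm.sign σ := by
  simp [insertPerm, sign_cycleRange]

lemma insertPerm_bijective (m : ℕ) :
    Function.Bijective fun q : Fin (m + 1) × Perm (Fin m) => insertPerm q.1 q.2 := by
  refine (Fintype.bijective_iff_injective_and_card _).2
    ⟨?_, by simp [Fintype.card_perm, Nat.factorial_succ]⟩
  rintro ⟨p, σ⟩ ⟨q, τ⟩ h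
  have hpq : p = q := by simpa using congrArg (· 0) h
  subst hpq
  refine Prod.ext rfl (Perm.ext fun k => (p.succAbove_right_injective :) ?_)
  simpa using congrArg (· k.succ) h

end Fin

section Permutations

variable {R : Type*} [CommRing R]

lemma sum_sign_mul_comp_succ {m : ℕ} (F : (Fin m → Fin (m + 1)) → R) :
    ∑ τ : Perm (Fin (m + 1)), ((Perm.sign τ : ℤ) : R) * F (τ ∘ Fin.succ) =
      ∑ p : Fin (m + 1), ∑ σ : Perm (Fin m),
        (-1 : R) ^ (p : ℕ) * ((Perm.sign σ : ℤ) : R) * F (p.succAbove ∘ σ) := by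
  rw [← Fintype.sum_prod_type']
  refine (Fintype.sum_bijective _ (Fin.insertPerm_bijective m) _ _ fun q => ?_).symm
  simp only [Fin.sign_insertPerm, Units.val_mul, Units.val_pow_eq_pow_val, Units.val_neg,
    Units.val_one, Int.cast_mul, Int.cast_pow, Int.cast_neg, Int.cast_one]
  congr 2
  funext k
  simp

lemma sum_sign_mul_comp_succAbove {m : ℕ} (F : (Fin m → Fin (m + 1)) → R) (p : Fin (m + 1)) :
    ∑ τ : Perm (Fin (m + 1)), ((Perm.sign τ : ℤ) : R) * F (τ ∘ p.succAbove) =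
      (-1 : R) ^ (p : ℕ) *
        ∑ τ : Perm (Fin (m + 1)), ((Perm.sign τ : ℤ) : R) * F (τ ∘ Fin.succ) := by
  rw [← Equiv.sum_comp (Equiv.mulRight p.cycleRange), mul_sum]
  refine sum_congr rfl fun τ _ => ?_
  have hcomp : (τ * p.cycleRange) ∘ p.succAbove = τ ∘ Fin.succ := by
    funext k
    simp
  simp only [coe_mulRight, hcomp, Perm.sign_mul, Fin.sign_cycleRange, Units.val_mul,
    Units.val_pow_eq_pow_val, Units.val_neg, Units.val_one, Int.cast_mul, Int.cast_pow,
    Int.cast_neg, Int.cast_one]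
  ring

end Permutations

section Cochains

variable {X R : Type*} [CommRing R]

def coboundary {m : ℕ} (g : (Fin (m + 1) → X) → R) (x : Fin (m + 1 + 1) → X) : R :=
  ∑ j : Fin (m + 1 + 1), (-1 : R) ^ (j : ℕ) * g (x ∘ j.succAbove)

def alternation {m : ℕ} (g : (Fin m → X) → R) (x : Fin m → X) : R :=
  ∑ σ : Perm (Fin m), ((Perm.sign σ : ℤ) : R) * g (x ∘ σ)

lemma coboundary_const_mul {m : ℕ} (a : R) (g : (Fin (m + 1) → X) → R)
    (x : Fin (m + 1 + 1) → X) :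
    coboundary (fun y => a * g y) x = a * coboundary g x := by
  simp only [coboundary, mul_sum]
  exact sum_congr rfl fun _ _ => mul_left_comm _ _ _

theorem coboundary_alternation {m : ℕ} (g : (Fin (m + 1) → X) → R) (x : Fin (m + 1 + 1) → X) :
    (m + 2 : R) * coboundary (alternation g) x = alternation (coboundary g) x := by
  have hδA : coboundary (alternation g) x =
      ∑ τ : Perm (Fin (m + 1 + 1)), ((Perm.sign τ : ℤ) : R) * g (x ∘ τ ∘ Fin.succ) := by
    rw [sum_sign_mul_comp_succ (fun φ => g (x ∘ φ))]
    simp only [coboundary, alternation, mul_sum, mul_assoc]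
    rfl
  have hAδ : alternation (coboundary g) x =
      ∑ p : Fin (m + 1 + 1), (-1 : R) ^ (p : ℕ) * ((-1 : R) ^ (p : ℕ) *
        ∑ τ : Perm (Fin (m + 1 + 1)), ((Perm.sign τ : ℤ) : R) * g (x ∘ τ ∘ Fin.succ)) := by
    simp_rw [← sum_sign_mul_comp_succAbove (fun φ => g (x ∘ φ)), alternation, coboundary,
      mul_sum]
    rw [sum_comm]
    exact sum_congr rfl fun _ _ => sum_congr rfl fun _ _ => mul_left_comm _ _ _
  simp only [hδA, hAδ, ← mul_assoc, ← mul_pow, neg_one_mul, neg_neg, one_pow, one_mul, sum_const,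
    card_univ, Fintype.card_fin, nsmul_eq_mul]
  push_cast
  ring

theorem coboundary_alternation_eq_zero [NoZeroDivisors R] [CharZero R] {m : ℕ}
    (g : (Fin (m + 1) → X) → R) (x : Fin (m + 1 + 1) → X)
    (h : ∀ τ : Perm (Fin (m + 1 + 1)), coboundary g (x ∘ τ) = 0) :
    coboundary (alternation g) x = 0 := by
  have hsum := coboundary_alternation g x
  rw [alternation, sum_eq_zero fun τ _ => by rw [h τ, mul_zero]] at hsum
  exact (mul_eq_zero.1 hsum).resolve_left (by exact_mod_cast Nat.succ_ne_zero (m + 1))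

def cup {q : ℕ} (a : X → X → X → R) (b : (Fin (q + 1) → X) → R) (x : Fin (q + 1 + 2) → X) :
    R :=
  a (x 0) (x 1) (x 2) * b (fun k => x k.succ.succ)

lemma coboundary_cup {q : ℕ} (a : X → X → X → R) (b : (Fin (q + 1) → X) → R)
    (x : Fin (q + 1 + 2 + 1) → X) :
    coboundary (cup a b) x =
      (a (x 1) (x 2) (x 3) - a (x 0) (x 2) (x 3) + a (x 0) (x 1) (x 3) - a (x 0) (x 1) (x 2)) *
          b (fun k => x k.succ.succ.succ) +
        a (x 0) (x 1) (x 2) * coboundary b (fun k => x k.succ.succ) := by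
  have h3 : (3 : Fin (q + 1 + 2 + 1)) = (0 : Fin (q + 1)).succ.succ.succ := rfl
  simp only [coboundary, cup, Fin.sum_univ_succ (n := q + 1 + 2),
    Fin.sum_univ_succ (n := q + 1 + 1), Fin.sum_univ_succ (n := q + 1), Function.comp_def,
    ← Fin.succ_zero_eq_one, ← Fin.succ_one_eq_two, h3, Fin.succAbove_zero,
    Fin.succ_succAbove_zero, Fin.succ_succAbove_succ, Fin.val_succ, Fin.val_zero]
  have hsign : ∀ (k : ℕ) (r s : R),
      (-1) ^ (k + 1 + 1 + 1) * (r * s) = r * ((-1) ^ (k + 1) * s) :=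
    fun k r s => by ring
  simp only [hsign, ← mul_sum]
  ring

def cupProd {n : ℕ} (c : Fin n → X → X → X → R) (x : Fin (2 * n + 1) → X) : R :=
  ∏ i : Fin n, c i (x ⟨2 * i, by omega⟩) (x ⟨2 * i + 1, by omega⟩) (x ⟨2 * i + 2, by omega⟩)

lemma cupProd_succ {n : ℕ} (c : Fin (n + 1) → X → X → X → R) (x : Fin (2 * n + 1 + 2) → X) :
    cupProd c x = cup (c 0) (cupProd fun i => c i.succ) x := by
  rw [cupProd, Fin.prod_univ_succ]
  rfl

theorem coboundary_cupProd_eq_zero {Y : Type*} {n : ℕ} (ρ : Fin n → X → Y)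
    (c : Fin n → X → X → X → R)
    (hc : ∀ i a b c' d, ρ i a ≠ ρ i b → ρ i a ≠ ρ i c' → ρ i a ≠ ρ i d → ρ i b ≠ ρ i c' →
      ρ i b ≠ ρ i d → ρ i c' ≠ ρ i d → c i b c' d - c i a c' d + c i a b d - c i a b c' = 0)
    (x : Fin (2 * n + 1 + 1) → X) (hx : ∀ i, Function.Injective (ρ i ∘ x)) :
    coboundary (cupProd c) x = 0 := by
  induction n with
  | zero => simp [coboundary, cupProd]
  | succ n ih =>
    rw [show cupProd c = cup (c 0) (cupProd fun i => c i.succ) from funext (cupProd_succ c),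
      coboundary_cup, hc 0 _ _ _ _ ?_ ?_ ?_ ?_ ?_ ?_, ih (fun i => ρ i.succ) (fun i => c i.succ)
      (fun i => hc i.succ) (fun k => x k.succ.succ)
      fun i => (hx i.succ).comp ((Fin.succ_injective _).comp (Fin.succ_injective _))]
    · ring
    all_goals exact (hx 0).ne (Fin.ne_of_val_ne (by simp [Nat.mod_eq_of_lt]))

end Cochains

theorem Ccocycle_closed_general (n : ℕ) (θ : Fin (2 * n + 1 + 1) → Torus n)
    (hdist : ∀ i : Fin n, Function.Injective fun j => θ j i) :
    ∑ j : Fin (2 * n + 1 + 1),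
      (-1 : ℝ) ^ (j : ℕ) * Ccocycle n (fun k => θ (j.succAbove k)) = 0 := by
  let f := cupProd fun (i : Fin n) (a b c : Torus n) => cyclicOrientation (a i) (b i) (c i)
  have hC : Ccocycle n = fun y => (1 / (2 * n + 1).factorial : ℝ) * alternation f y := rfl
  have hf : ∀ τ : Perm (Fin (2 * n + 1 + 1)), coboundary f (θ ∘ τ) = 0 := fun τ =>
    coboundary_cupProd_eq_zero (fun (i : Fin n) (p : Torus n) => p i)
      (fun (i : Fin n) (a b c : Torus n) => cyclicOrientation (a i) (b i) (c i))
      (fun _ _ _ _ _ => cyclicOrientation_cocycle) (θ ∘ τ) fun i => (hdist i).comp τ.injective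
  show coboundary (Ccocycle n) θ = 0
  rw [hC, coboundary_const_mul, coboundary_alternation_eq_zero f θ hf, mul_zero]

/-- `C` is closed as a combinatorial cochain, on tuples whose
coordinates are pairwise distinct in each circle factor. -/
theorem Ccocycle_closed (n : ℕ) (hn : 1 ≤ n) (θ : Fin (2 * n + 1 + 1) → Torus n)
    (hdist : ∀ i : Fin n, Function.Injective fun j => θ j i) :
    ∑ j : Fin (2 * n + 1 + 1),
      (-1 : ℝ) ^ (j : ℕ) * Ccocycle n (fun k => θ (j.succAbove k)) = 0 :=
  Ccocycle_closed_general n θ hdist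
end
end

section
/- Let n ≥ 1 and let a₀, a₁, …, a_{2n} : 𝕋ⁿ → ℝ be integrable functions each of integral zero, i.e. ∫_{𝕋ⁿ} a_j dθ = 0 for j = 0,…,2n. Then ∫_{(𝕋ⁿ)^{2n+1}} C(θ₀,…,θ_{2n}) a₀(θ₀) a₁(θ₁) ⋯ a_{2n}(θ_{2n}) dθ₀⋯dθ_{2n} = 0. -/
/-!
Off the null set where two of the points share a circle coordinate, the orientation cocycle is a
coboundary: `e(a, b, c) = s(c - a) - s(b - a) - s(c - b)` for the sawtooth `s(z) = z / π - 1`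
(`z` read in `[0, 2π)`). Substituting this into `C` and expanding the product over the `n` circle
factors writes the integrand as a sum of products of `n` functions, each depending on only two of
the `2n + 1` points. Such a product misses one of the points `θⱼ`, and integrating in `θⱼ` first
kills the term because `∫ aⱼ = 0`.
-/

open MeasureTheory Real
open scoped Real

noncomputable section

lemma sbtw_iff_btw_of_ne {α : Type*} [CircularPartialOrder α] {a b c : α} (hab : a ≠ b)
    (hbc : b ≠ c) (hca : c ≠ a) : sbtw a b c ↔ btw a b c := by
  refine ⟨fun h => h.btw, fun h => sbtw_of_btw_not_btw h fun h' => ?_⟩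
  rcases btw_antisymm h h' with h | h | h <;> contradiction

namespace AddCircle

variable {p : ℝ} [hp : Fact (0 < p)]

-- Makes Haar measure on the circle atomless, via `IsHaarMeasure.nullSingletonClass`.
instance : Nontrivial (AddCircle p) := by
  have hp := hp.out
  refine nontrivial_of_ne ((p / 2 : ℝ) : AddCircle p) ((0 : ℝ) : AddCircle p) ?_
  rw [Ne, coe_eq_coe_iff_of_mem_Ico (a := 0) ⟨by positivity, by linarith⟩ ⟨le_rfl, by linarith⟩]
  positivity

lemma equivIco_mem (z : AddCircle p) : (equivIco p 0 z : ℝ) ∈ Set.Ico 0 p := by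
  simpa using (equivIco p 0 z).2

lemma equivIco_eq_zero_iff {z : AddCircle p} : (equivIco p 0 z : ℝ) = 0 ↔ z = 0 := by
  refine ⟨fun h => ?_, fun h => ?_⟩
  · rw [← coe_equivIco (p := p) (a := 0) (y := z), h, coe_zero]
  · rw [h, ← coe_zero, equivIco_coe_of_mem ⟨le_rfl, by simpa using hp.out⟩]

lemma equivIco_add_eq_or (x y : AddCircle p) :
    (equivIco p 0 (x + y) : ℝ) = equivIco p 0 x + equivIco p 0 y ∨
      (equivIco p 0 (x + y) : ℝ) = equivIco p 0 x + equivIco p 0 y - p := by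
  have hx := equivIco_mem x
  have hy := equivIco_mem y
  have hxy : (((equivIco p 0 x + equivIco p 0 y : ℝ)) : AddCircle p) = x + y := by
    rw [coe_add, coe_equivIco, coe_equivIco]
  rcases lt_or_ge ((equivIco p 0 x : ℝ) + equivIco p 0 y) p with h | h
  · left
    rw [← hxy, equivIco_coe_of_mem ⟨by linarith [hx.1, hy.1], by simpa using h⟩]
  · right
    have hxy' : ((equivIco p 0 x + equivIco p 0 y - p : ℝ) : AddCircle p) = x + y := by
      rw [coe_sub, coe_period, sub_zero, hxy]
    rw [← hxy', equivIco_coe_of_mem ⟨by linarith, by linarith [hx.2, hy.2]⟩]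

lemma equivIoc_eq_equivIco {z : AddCircle p} (hz : z ≠ 0) :
    (equivIoc p 0 z : ℝ) = equivIco p 0 z := by
  induction z using QuotientAddGroup.induction_on with
  | H t =>
    refine ((AddCommGroup.not_modEq_iff_toIcoMod_eq_toIocMod hp.out).1 fun h => hz ?_).symm
    rw [AddCommGroup.modEq_iff_eq_mod_zmultiples] at h
    exact h.symm.trans (QuotientAddGroup.mk_zero _)

lemma btw_iff_equivIco_sub_le {a b c : AddCircle p} (hca : c ≠ a) :
    btw a b c ↔ (equivIco p 0 (b - a) : ℝ) ≤ equivIco p 0 (c - a) := by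
  rw [← equivIoc_eq_equivIco (sub_ne_zero.2 hca)]
  rfl

lemma sbtw_iff_equivIco_sub_eq_add {a b c : AddCircle p} (hab : a ≠ b) (hbc : b ≠ c)
    (hca : c ≠ a) : sbtw a b c ↔
      (equivIco p 0 (c - a) : ℝ) = equivIco p 0 (b - a) + equivIco p 0 (c - b) := by
  have hv : 0 < (equivIco p 0 (c - b) : ℝ) :=
    (equivIco_mem _).1.lt_of_ne' (equivIco_eq_zero_iff.not.2 (sub_ne_zero.2 hbc.symm))
  have hv' := (equivIco_mem (c - b)).2
  rw [sbtw_iff_btw_of_ne hab hbc hca, btw_iff_equivIco_sub_le hca]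
  rcases sub_add_sub_cancel' b a c ▸ equivIco_add_eq_or (b - a) (c - b) with h | h <;>
    rw [h] <;> constructor <;> intro <;> linarith [hp.out]

def sawtooth (z : AddCircle p) : ℝ := 2 * equivIco p 0 z / p - 1

lemma measurable_sawtooth : Measurable (sawtooth (p := p)) :=
  ((measurable_subtype_coe.comp (measurableEquivIco p 0).measurable).const_mul 2).div_const p
    |>.sub_const 1

lemma abs_sawtooth_le (z : AddCircle p) : |sawtooth z| ≤ 1 := by
  have hz := equivIco_mem z
  have hp := hp.out
  rw [abs_le, sawtooth, le_sub_iff_add_le, sub_le_iff_le_add, le_div_iff₀ hp, div_le_iff₀ hp]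
  constructor <;> linarith [hz.1, hz.2]

end AddCircle

open AddCircle

lemma eCocycle_eq_sawtooth {a b c : Circle2pi} (hab : a ≠ b) (hbc : b ≠ c) (hca : c ≠ a) :
    eCocycle a b c = sawtooth (c - a) - sawtooth (b - a) - sawtooth (c - b) := by
  have hsum := sub_add_sub_cancel' b a c ▸ equivIco_add_eq_or (b - a) (c - b)
  rw [eCocycle, sbtw_iff_equivIco_sub_eq_add hab hbc hca]
  simp only [sawtooth]
  split_ifs with h
  · rw [h]; field_simp; ring
  · rw [hsum.resolve_left h]; field_simp; ring

section ProdAnnihilator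

variable {α : Type*} [MeasurableSpace α] {μ : Measure α} [SigmaFinite μ] {m : ℕ}

lemma integral_mul_prod_eq_zero_of_update_eq (a : Fin (m + 1) → α → ℝ) {j₀ : Fin (m + 1)}
    (hzero : ∫ x, a j₀ x ∂μ = 0) {G : (Fin (m + 1) → α) → ℝ}
    (hG : ∀ θ x, G (Function.update θ j₀ x) = G θ) :
    ∫ θ, G θ * ∏ j, a j (θ j) ∂(Measure.pi fun _ => μ) = 0 := by
  rcases isEmpty_or_nonempty α with hα | ⟨⟨x₀⟩⟩
  · simp [Measure.eq_zero_of_isEmpty (Measure.pi fun _ => μ)]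
  have hsplit : ∀ (x : α) (y : Fin m → α),
      G (j₀.insertNth x y) * ∏ j, a j (j₀.insertNth (α := fun _ => α) x y j)
        = a j₀ x * (G (j₀.insertNth x₀ y) * ∏ j, a (j₀.succAbove j) (y j)) := by
    intro x y
    rw [← hG (j₀.insertNth x₀ y) x, Fin.update_insertNth, Fin.prod_univ_succAbove _ j₀]
    simp only [Fin.insertNth_apply_same, Fin.insertNth_apply_succAbove]
    ring
  rw [← (measurePreserving_piFinSuccAbove (fun _ => μ) j₀).symm.integral_comp']
  simp only [MeasurableEquiv.piFinSuccAbove_symm_apply, Fin.insertNthEquiv, Equiv.coe_fn_mk]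
  simp only [hsplit]
  rw [integral_prod_mul (a j₀) fun y => G (j₀.insertNth x₀ y) * ∏ j, a (j₀.succAbove j) (y j),
    hzero, zero_mul]

variable (μ) in
def prodAnnihilator {ι : Type*} [Fintype ι] (a : ι → α → ℝ) : Submodule ℝ ((ι → α) → ℝ) where
  carrier := {G | Integrable (fun θ => G θ * ∏ j, a j (θ j)) (Measure.pi fun _ => μ) ∧
    ∫ θ, G θ * ∏ j, a j (θ j) ∂(Measure.pi fun _ => μ) = 0}
  add_mem' {G H} hG hH := by
    simp only [Set.mem_ofPred_eq, Pi.add_apply, add_mul] at *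
    exact ⟨hG.1.add hH.1, by rw [integral_add hG.1 hH.1, hG.2, hH.2, add_zero]⟩
  zero_mem' := by simp
  smul_mem' c G hG := by
    simp only [Set.mem_ofPred_eq, Pi.smul_apply, smul_eq_mul, mul_assoc] at *
    exact ⟨hG.1.const_mul c, by rw [integral_const_mul, hG.2, mul_zero]⟩

lemma mem_prodAnnihilator_of_update_eq {a : Fin (m + 1) → α → ℝ}
    (hint : ∀ j, Integrable (a j) μ) {j₀ : Fin (m + 1)} (hzero : ∫ x, a j₀ x ∂μ = 0)
    {G : (Fin (m + 1) → α) → ℝ} {C : ℝ} (hGm : AEStronglyMeasurable G (Measure.pi fun _ => μ))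
    (hGb : ∀ θ, ‖G θ‖ ≤ C) (hG : ∀ θ x, G (Function.update θ j₀ x) = G θ) :
    G ∈ prodAnnihilator μ a :=
  ⟨(Integrable.fintype_prod hint).bdd_mul hGm (ae_of_all _ hGb),
    integral_mul_prod_eq_zero_of_update_eq a hzero hG⟩

variable {n : ℕ} {a : Fin (m + 1) → α → ℝ} {C : ℝ}

lemma prod_pair_mem_prodAnnihilator (hnm : 2 * n ≤ m) (hint : ∀ j, Integrable (a j) μ)
    (hzero : ∀ j, ∫ x, a j x ∂μ = 0) {F : Fin n → α → α → ℝ}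
    (hFm : ∀ i, Measurable (Function.uncurry (F i))) (hFb : ∀ i x y, ‖F i x y‖ ≤ C)
    (X Y : Fin n → Fin (m + 1)) :
    (fun θ => ∏ i, F i (θ (X i)) (θ (Y i))) ∈ prodAnnihilator μ a := by
  classical
  have hcard : (Finset.univ.image X ∪ Finset.univ.image Y).card <
      (Finset.univ : Finset (Fin (m + 1))).card := by
    refine (Finset.card_union_le _ _).trans_lt ?_
    grw [Finset.card_image_le, Finset.card_image_le]
    simp only [Finset.card_univ, Fintype.card_fin]
    omega
  obtain ⟨j₀, -, hj₀⟩ := Finset.exists_mem_notMem_of_card_lt_card hcard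
  simp only [Finset.mem_union, Finset.mem_image, Finset.mem_univ, true_and, not_or,
    not_exists] at hj₀
  refine mem_prodAnnihilator_of_update_eq hint (hzero j₀) (C := C ^ n) ?_ (fun θ => ?_)
    (fun θ x => ?_)
  · refine (Finset.measurable_prod _ fun i _ => ?_).aestronglyMeasurable
    exact (hFm i).comp ((measurable_pi_apply (X i)).prodMk (measurable_pi_apply (Y i)) :
      Measurable fun θ : Fin (m + 1) → α => (θ (X i), θ (Y i)))
  · rw [norm_prod]
    exact (Finset.prod_le_prod (fun _ _ => norm_nonneg _) fun i _ => hFb i _ _).trans_eq (by simp)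
  · exact Finset.prod_congr rfl fun i _ => by
      rw [Function.update_of_ne (hj₀.1 i), Function.update_of_ne (hj₀.2 i)]

lemma prod_sum_pair_mem_prodAnnihilator {κ : Type*} [Fintype κ] (hnm : 2 * n ≤ m)
    (hint : ∀ j, Integrable (a j) μ) (hzero : ∀ j, ∫ x, a j x ∂μ = 0)
    {F : Fin n → κ → α → α → ℝ} (hFm : ∀ i k, Measurable (Function.uncurry (F i k)))
    (hFb : ∀ i k x y, ‖F i k x y‖ ≤ C) (A B : Fin n → κ → Fin (m + 1)) :
    (fun θ => ∏ i, ∑ k, F i k (θ (A i k)) (θ (B i k))) ∈ prodAnnihilator μ a := by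
  classical
  have hexpand : (fun θ : Fin (m + 1) → α => ∏ i, ∑ k, F i k (θ (A i k)) (θ (B i k))) =
      ∑ K : Fin n → κ, fun θ => ∏ i, F i (K i) (θ (A i (K i))) (θ (B i (K i))) := by
    ext θ
    rw [Finset.prod_univ_sum, Fintype.piFinset_univ, Finset.sum_apply]
  rw [hexpand]
  exact Submodule.sum_mem _ fun K _ => prod_pair_mem_prodAnnihilator hnm hint hzero
    (fun i => hFm i (K i)) (fun i => hFb i (K i)) _ _

lemma prod_sub_sub_mem_prodAnnihilator (hnm : 2 * n ≤ m) (hint : ∀ j, Integrable (a j) μ)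
    (hzero : ∀ j, ∫ x, a j x ∂μ = 0) {f : Fin n → α → α → ℝ}
    (hfm : ∀ i, Measurable (Function.uncurry (f i))) (hfb : ∀ i x y, ‖f i x y‖ ≤ C)
    (X₀ X₁ X₂ : Fin n → Fin (m + 1)) :
    (fun θ => ∏ i, (f i (θ (X₀ i)) (θ (X₂ i)) - f i (θ (X₀ i)) (θ (X₁ i))
      - f i (θ (X₁ i)) (θ (X₂ i)))) ∈ prodAnnihilator μ a := by
  convert prod_sum_pair_mem_prodAnnihilator hnm hint hzero
    (F := fun i k x y => ![1, -1, -1] k * f i x y) (fun i k => (hfm i).const_mul _)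
    (C := C) (fun i k x y => by fin_cases k <;> simpa using hfb i x y)
    (fun i => ![X₀ i, X₀ i, X₁ i]) (fun i => ![X₂ i, X₁ i, X₂ i]) using 3
  simp only [Fin.sum_univ_three, Matrix.cons_val_zero, Matrix.cons_val_one, Matrix.cons_val,
    one_mul, neg_mul]
  ring

variable {β : Type*} [MeasurableSpace β] [MeasurableEq β]

lemma ae_pi_ne_of_measure_preimage_singleton [IsProbabilityMeasure μ] {f : α → β}
    (hf : Measurable f) (hfib : ∀ c, μ (f ⁻¹' {c}) = 0) {p q : Fin (m + 1)} (hpq : p ≠ q) :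
    ∀ᵐ θ ∂(Measure.pi fun _ => μ), f (θ p) ≠ f (θ q) := by
  obtain ⟨q', rfl⟩ := Fin.exists_succAbove_eq hpq.symm
  have he := measurePreserving_piFinSuccAbove (fun _ => μ) p
  set S := {z : α × (Fin m → α) | f (z.2 q') = f z.1}
  have hS : MeasurableSet S :=
    measurableSet_eq_fun (hf.comp ((measurable_pi_apply q').comp measurable_snd))
      (hf.comp measurable_fst)
  have hpre : {θ : Fin (m + 1) → α | f (θ p) = f (θ (p.succAbove q'))} =
      MeasurableEquiv.piFinSuccAbove (fun _ => α) p ⁻¹' S := by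
    ext θ
    simp [S, MeasurableEquiv.piFinSuccAbove_apply, Fin.removeNth, eq_comm]
  have hslice : ∀ x, (Measure.pi fun _ => μ) (Prod.mk x ⁻¹' S) = 0 := fun x =>
    ((measurePreserving_eval (fun _ => μ) q').measure_preimage
      (hf (measurableSet_singleton (f x))).nullMeasurableSet).trans (hfib (f x))
  rw [ae_iff]
  simp only [ne_eq, not_not]
  rw [hpre, he.measure_preimage hS.nullMeasurableSet, Measure.prod_apply hS]
  simp [hslice]

end ProdAnnihilator

lemma ae_injective_apply_apply {n m : ℕ} :
    ∀ᵐ θ ∂(Measure.pi fun _ : Fin (m + 1) => torusMeasure n),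
      ∀ i, Function.Injective fun j => θ j i := by
  rw [ae_all_iff]
  intro i
  have hne : ∀ᵐ θ ∂(Measure.pi fun _ : Fin (m + 1) => torusMeasure n),
      ∀ p q, p ≠ q → θ p i ≠ θ q i := by
    simp only [ae_all_iff, Filter.eventually_imp_distrib_left]
    exact fun p q hpq => ae_pi_ne_of_measure_preimage_singleton (measurable_pi_apply i)
      (Measure.pi_hyperplane _ i) hpq
  filter_upwards [hne] with θ hθ p q
  exact not_imp_not.1 (hθ p q)

def Csawtooth (n : ℕ) (θ : Fin (2 * n + 1) → Torus n) : ℝ :=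
  (1 / (2 * n + 1).factorial : ℝ) *
    ∑ σ : Equiv.Perm (Fin (2 * n + 1)), ((Equiv.Perm.sign σ : ℤ) : ℝ) *
      ∏ i : Fin n,
        (sawtooth (θ (σ ⟨2 * i.1 + 2, by omega⟩) i - θ (σ ⟨2 * i.1, by omega⟩) i)
          - sawtooth (θ (σ ⟨2 * i.1 + 1, by omega⟩) i - θ (σ ⟨2 * i.1, by omega⟩) i)
          - sawtooth (θ (σ ⟨2 * i.1 + 2, by omega⟩) i - θ (σ ⟨2 * i.1 + 1, by omega⟩) i))

lemma Ccocycle_eq_Csawtooth {n : ℕ} {θ : Fin (2 * n + 1) → Torus n}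
    (hθ : ∀ i, Function.Injective fun j => θ j i) : Ccocycle n θ = Csawtooth n θ := by
  refine congrArg _ (Finset.sum_congr rfl fun σ _ => congrArg _ <|
    Finset.prod_congr rfl fun i _ => ?_)
  refine eCocycle_eq_sawtooth ((hθ i).ne (σ.injective.ne ?_)) ((hθ i).ne (σ.injective.ne ?_))
    ((hθ i).ne (σ.injective.ne ?_)) <;> simp [Fin.ext_iff]

lemma Csawtooth_mem_prodAnnihilator {n : ℕ} {a : Fin (2 * n + 1) → Torus n → ℝ}
    (hint : ∀ j, Integrable (a j) (torusMeasure n))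
    (hzero : ∀ j, ∫ θ, a j θ ∂(torusMeasure n) = 0) :
    Csawtooth n ∈ prodAnnihilator (torusMeasure n) a := by
  set S := prodAnnihilator (torusMeasure n) a
  have hterm := fun σ : Equiv.Perm (Fin (2 * n + 1)) =>
    prod_sub_sub_mem_prodAnnihilator le_rfl hint hzero (f := fun i x y => sawtooth (y i - x i))
      (fun i => measurable_sawtooth.comp (by fun_prop)) (fun i x y => abs_sawtooth_le _)
      (fun i => σ ⟨2 * i.1, by omega⟩) (fun i => σ ⟨2 * i.1 + 1, by omega⟩)
      (fun i => σ ⟨2 * i.1 + 2, by omega⟩)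
  convert S.smul_mem (1 / (2 * n + 1).factorial : ℝ) (S.sum_mem (t := Finset.univ)
    fun σ _ => S.smul_mem ((Equiv.Perm.sign σ : ℤ) : ℝ) (hterm σ)) using 1
  ext θ
  simp [Csawtooth, Finset.sum_apply]

theorem integral_Ccocycle_zero_mass_general (n : ℕ)
    (a : Fin (2 * n + 1) → Torus n → ℝ)
    (hint : ∀ j, Integrable (a j) (torusMeasure n))
    (hzero : ∀ j, ∫ θ, a j θ ∂(torusMeasure n) = 0) :
    ∫ θ : Fin (2 * n + 1) → Torus n, Ccocycle n θ * ∏ j, a j (θ j)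
      ∂(Measure.pi fun _ => torusMeasure n) = 0 := by
  have hC : ∀ᵐ θ ∂(Measure.pi fun _ => torusMeasure n),
      Ccocycle n θ * ∏ j, a j (θ j) = Csawtooth n θ * ∏ j, a j (θ j) :=
    ae_injective_apply_apply.mono fun θ hθ => by rw [Ccocycle_eq_Csawtooth hθ]
  rw [integral_congr_ae hC]
  exact (Csawtooth_mem_prodAnnihilator hint hzero).2

/-- integrating `C` against `2n+1` integrable functions of
integral zero gives zero. -/
theorem integral_Ccocycle_zero_mass (n : ℕ) (hn : 1 ≤ n)
    (a : Fin (2 * n + 1) → Torus n → ℝ)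
    (hint : ∀ j, Integrable (a j) (torusMeasure n))
    (hzero : ∀ j, ∫ θ, a j θ ∂(torusMeasure n) = 0) :
    ∫ θ : Fin (2 * n + 1) → Torus n, Ccocycle n θ * ∏ j, a j (θ j)
      ∂(Measure.pi fun _ => torusMeasure n) = 0 :=
  integral_Ccocycle_zero_mass_general n a hint hzero
end
end

section
/- For every integer n ≥ 1, the number of permutations σ of the set {0, 1, …, 2n} such that for every i ∈ {1,…,n} the set {2i−1, 2i} is contained in the image set {σ(2i−2), σ(2i−1), σ(2i)} equals 2ⁿ(2n+1). -/
open MeasureTheory Real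
open scoped Real

noncomputable section

/-! If `σ` is suitable and `p = σ⁻¹ 0`, every position `x ≠ p` carries a value of the block
that the cycle `Fin.cycleRange p = (0 1 … p)` sends `x` to: at odd positions the windows leave
no other choice, at an even position `x` a pigeonhole count of the positions beyond `x` (away
from `p`) forces it. So `σ = w * cycleRange p` with `w` preserving every block `{2i - 1, 2i}`, and
conversely every such product is suitable: `2n + 1` choices of `p` and `2ⁿ` choices of `w`. -/

open Finset Equiv

theorem Function.Injective.apply_notMem_of_mapsTo {α β : Type*} {f : α → β}
    (hf : Function.Injective f) {s : Finset α} {t : Finset β} (hst : Set.MapsTo f s t)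
    (hcard : #t ≤ #s) {a : α} (ha : a ∉ s) : f a ∉ t := fun hat => by
  obtain ⟨b, hb, hba⟩ := surjOn_of_injOn_of_card_le f hst hf.injOn hcard hat
  exact ha (hf hba ▸ hb)

namespace SuitablePerm

variable {n : ℕ}

/-- The values `2i - 1, 2i` form block `i ≥ 1`; the value `0` forms block `0` on its own. -/
def block (n : ℕ) (v : Fin (2 * n + 1)) : Fin (n + 1) := ⟨(v + 1) / 2, by omega⟩

@[simp] lemma val_block (v : Fin (2 * n + 1)) : (block n v : ℕ) = (v + 1) / 2 := rfl

lemma block_eq_zero_iff {v : Fin (2 * n + 1)} : block n v = 0 ↔ v = 0 := by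
  simp only [Fin.ext_iff, val_block, Fin.val_zero]
  omega

lemma card_block_fiber_zero : Fintype.card {v // block n v = 0} = 1 := by
  simp [block_eq_zero_iff]

lemma card_block_fiber_succ (j : Fin n) : Fintype.card {v // block n v = j.succ} = 2 := by
  rw [Fintype.card_subtype, card_eq_two]
  refine ⟨⟨2 * j + 1, by omega⟩, ⟨2 * j + 2, by omega⟩, by simp [Fin.ext_iff], ?_⟩
  ext v
  simp only [mem_filter, mem_univ, true_and, mem_insert, mem_singleton, Fin.ext_iff, val_block,
    Fin.val_succ]
  omega

lemma card_stabilizer_block :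
    Fintype.card {w : Perm (Fin (2 * n + 1)) // block n ∘ w = block n} = 2 ^ n := by
  rw [DomMulAct.stabilizer_card, Fin.prod_univ_succ, card_block_fiber_zero]
  simp [card_block_fiber_succ]

lemma inv_apply_zero_of_block_comp_eq {w : Perm (Fin (2 * n + 1))} (hw : block n ∘ w = block n) :
    w⁻¹ 0 = 0 := by
  rw [← block_eq_zero_iff, ← congrFun hw, Function.comp_apply, Perm.inv_def,
    Equiv.apply_symm_apply, block_eq_zero_iff]

/-- `β x = i` says that position `x` carries a value of block `i`; the values of block `i ≥ 1`
must sit at the positions `2i - 2, 2i - 1, 2i`. -/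
def IsSuitable (β : Fin (2 * n + 1) → Fin (n + 1)) : Prop :=
  ∀ x, β x ≠ 0 → (x : ℕ) ≤ 2 * β x ∧ 2 * (β x : ℕ) ≤ x + 2

lemma pair_subset_image_triple_iff (σ : Perm (Fin (2 * n + 1))) :
    (∀ i : Fin n,
        ({⟨2 * i.1 + 1, by omega⟩, ⟨2 * i.1 + 2, by omega⟩} : Finset (Fin (2 * n + 1))) ⊆
          {σ ⟨2 * i.1, by omega⟩, σ ⟨2 * i.1 + 1, by omega⟩, σ ⟨2 * i.1 + 2, by omega⟩}) ↔
      IsSuitable (block n ∘ σ) := by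
  constructor
  · intro h x hx
    simp only [Function.comp_apply, ne_eq, Fin.ext_iff, val_block, Fin.val_zero] at hx ⊢
    have hmem := h ⟨((σ x : ℕ) + 1) / 2 - 1, by omega⟩
      (show σ x ∈ _ by simp only [mem_insert, mem_singleton, Fin.ext_iff]; omega)
    simp only [mem_insert, mem_singleton, σ.injective.eq_iff, Fin.ext_iff] at hmem
    omega
  · intro h i v hv
    obtain ⟨x, rfl⟩ := σ.surjective v
    simp only [mem_insert, mem_singleton, Fin.ext_iff] at hv
    have hσx : block n (σ x) ≠ 0 := by
      simp only [ne_eq, Fin.ext_iff, val_block, Fin.val_zero]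
      omega
    have hx := h x hσx
    simp only [Function.comp_apply, val_block] at hx
    simp only [mem_insert, mem_singleton, σ.injective.eq_iff, Fin.ext_iff]
    omega

lemma isSuitable_block_comp_cycleRange (p : Fin (2 * n + 1)) :
    IsSuitable (block n ∘ p.cycleRange) := by
  intro x hx
  simp only [Function.comp_apply, val_block]
  rcases lt_trichotomy x p with hxp | rfl | hpx
  · rw [Fin.coe_cycleRange_of_lt hxp]; omega
  · simp [block_eq_zero_iff] at hx
  · rw [Fin.cycleRange_of_gt hpx]; omega

variable {σ : Perm (Fin (2 * n + 1))}

lemma lt_apply_of_even_of_lt (hσ : IsSuitable (block n ∘ σ)) (x : Fin (2 * n + 1))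
    (hx : Even (x : ℕ)) (hxp : x < σ⁻¹ 0) : x < σ x := by
  have hσx : σ x ≠ 0 := fun h => hxp.ne (Perm.eq_inv_iff_eq.2 h)
  have hmaps : Set.MapsTo σ (Iio x) (Ioc 0 x) := by
    intro y hy
    simp only [coe_Iio, coe_Ioc, Set.mem_Iio, Set.mem_Ioc] at hy ⊢
    have hσy : σ y ≠ 0 := fun h => (hy.trans hxp).ne (Perm.eq_inv_iff_eq.2 h)
    have := hσ y (by simpa [block_eq_zero_iff] using hσy)
    obtain ⟨k, hk⟩ := hx
    simp only [Function.comp_apply, val_block, Fin.lt_def, Fin.le_def] at this hy ⊢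
    refine ⟨Fin.pos_iff_ne_zero.2 hσy, ?_⟩
    omega
  have := σ.injective.apply_notMem_of_mapsTo hmaps (by simp) (a := x) (by simp)
  simp only [mem_Ioc, not_and, not_le] at this
  exact this (Fin.pos_iff_ne_zero.2 hσx)

lemma apply_le_of_even_of_gt (hσ : IsSuitable (block n ∘ σ)) (x : Fin (2 * n + 1))
    (hx : Even (x : ℕ)) (hpx : σ⁻¹ 0 < x) : σ x ≤ x := by
  have hmaps : Set.MapsTo σ (Ioi x) (Ioi x) := by
    intro y hy
    simp only [coe_Ioi, Set.mem_Ioi] at hy ⊢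
    have hσy : σ y ≠ 0 := fun h => (hpx.trans hy).ne' (Perm.eq_inv_iff_eq.2 h)
    have := hσ y (by simpa [block_eq_zero_iff] using hσy)
    obtain ⟨k, hk⟩ := hx
    simp only [Function.comp_apply, val_block, Fin.lt_def] at this hy ⊢
    omega
  simpa using σ.injective.apply_notMem_of_mapsTo hmaps le_rfl (a := x) (by simp)

lemma block_comp_eq_block_comp_cycleRange (hσ : IsSuitable (block n ∘ σ)) :
    block n ∘ σ = block n ∘ (σ⁻¹ 0).cycleRange := by
  funext x
  rcases eq_or_ne x (σ⁻¹ 0) with rfl | hxp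
  · simp
  have hσx := hσ x (by simpa [block_eq_zero_iff] using mt Perm.eq_inv_iff_eq.2 hxp)
  simp only [Function.comp_apply, val_block] at hσx
  ext
  simp only [Function.comp_apply, val_block]
  rcases hxp.lt_or_gt with hxp | hpx
  · rw [Fin.coe_cycleRange_of_lt hxp]
    rcases Nat.even_or_odd x with hx | ⟨k, hk⟩
    · have := Fin.lt_def.1 (lt_apply_of_even_of_lt hσ x hx hxp)
      omega
    · omega
  · rw [Fin.cycleRange_of_gt hpx]
    rcases Nat.even_or_odd x with hx | ⟨k, hk⟩
    · have := Fin.le_def.1 (apply_le_of_even_of_gt hσ x hx hpx)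
      omega
    · omega

def suitableEquiv : {σ : Perm (Fin (2 * n + 1)) // IsSuitable (block n ∘ σ)} ≃
    Fin (2 * n + 1) × {w : Perm (Fin (2 * n + 1)) // block n ∘ w = block n} where
  toFun σ := (σ.1⁻¹ 0, ⟨σ.1 * (σ.1⁻¹ 0).cycleRange⁻¹, by
    rw [Perm.coe_mul, ← Function.comp_assoc, block_comp_eq_block_comp_cycleRange σ.2,
      Function.comp_assoc, ← Perm.coe_mul, mul_inv_cancel, Perm.coe_one, Function.comp_id]⟩)
  invFun q := ⟨q.2.1 * q.1.cycleRange, by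
    rw [Perm.coe_mul, ← Function.comp_assoc, q.2.2]
    exact isSuitable_block_comp_cycleRange q.1⟩
  left_inv σ := by simp
  right_inv := by
    rintro ⟨p, w, hw⟩
    have hp : p.cycleRange.symm (w.symm 0) = p := by
      rw [← Perm.inv_def w, inv_apply_zero_of_block_comp_eq hw, Fin.cycleRange_symm_zero]
    ext <;> simp [hp]

lemma card_isSuitable :
    Nat.card {σ : Perm (Fin (2 * n + 1)) // IsSuitable (block n ∘ σ)} =
      2 ^ n * (2 * n + 1) := by
  rw [Nat.card_congr suitableEquiv, Nat.card_prod, Nat.card_eq_fintype_card (α := Fin _),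
    Nat.card_eq_fintype_card, card_stabilizer_block, Fintype.card_fin, mul_comm]

end SuitablePerm

open Classical in
/-- the number of suitable permutations is `2ⁿ(2n+1)`. -/
theorem count_suitable_permutations (n : ℕ) :
    (Finset.univ.filter fun σ : Equiv.Perm (Fin (2 * n + 1)) =>
        ∀ i : Fin n,
          ({⟨2 * i.1 + 1, by have := i.2; omega⟩, ⟨2 * i.1 + 2, by have := i.2; omega⟩} :
              Finset (Fin (2 * n + 1))) ⊆
            {σ ⟨2 * i.1, by have := i.2; omega⟩, σ ⟨2 * i.1 + 1, by have := i.2; omega⟩,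
              σ ⟨2 * i.1 + 2, by have := i.2; omega⟩}).card
      = 2 ^ n * (2 * n + 1) := by
  simp_rw [SuitablePerm.pair_subset_image_triple_iff]
  rw [← Fintype.card_subtype, Fintype.card_eq_nat_card, SuitablePerm.card_isSuitable]
end
end

section
/- For every nonzero integer k, one has 2 ∫_{(S¹)³} e(θ₀,θ₁,θ₂) cos(kθ₁) sin(kθ₂) dθ₀ dθ₁ dθ₂ = 1/(kπ), the integral being taken with respect to the normalized probability measure on each circle factor. -/
open MeasureTheory Real
open scoped Real

noncomputable section

/-!
Average over `θ₀` first: `e(θ₀, θ₁, θ₂) = 1` exactly when `θ₀` lies on the arc from `θ₂` to `θ₁`,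
so the `θ₀`-average of `e` is the sawtooth `1 - ℓ / π`, where `ℓ ∈ (0, 2π]` is the length of the
positive arc from `θ₁` to `θ₂`. Integrating the sawtooth against `sin (kθ₂)` (one integration by
parts) gives `cos (kθ₁) / (kπ)`, and `cos² (kθ₁)` has mean `1/2`, since translation by a quarter
period of `cos (k ·)` shows that it has the same mean as `sin² (kθ₁)`.
-/

namespace AddCircle

variable {p : ℝ} [Fact (0 < p)]

theorem sbtw_iff_equivIoc_lt_equivIco (a b c : AddCircle p) :
    sbtw a b c ↔ (equivIoc p 0 (c - b) : ℝ) < equivIco p 0 (a - b) :=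
  (sbtw_iff_not_btw.trans (not_congr btw_cyclic.symm)).trans not_le

theorem integral_haarAddCircle_eq_intervalIntegral {E : Type*} [NormedAddCommGroup E]
    [NormedSpace ℝ E] (f : AddCircle p → E) (t : ℝ) :
    ∫ q, f q ∂haarAddCircle = p⁻¹ • ∫ x in t..t + p, f x := by
  rw [integral_haarAddCircle, AddCircle.intervalIntegral_preimage]

end AddCircle

attribute [fun_prop] Real.Angle.continuous_cos Real.Angle.continuous_sin

namespace Real.Angle

theorem abs_cos_le_one (θ : Angle) : |cos θ| ≤ 1 := by
  induction θ using Real.Angle.induction_on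
  exact (cos_coe _).symm ▸ Real.abs_cos_le_one _

theorem abs_sin_le_one (θ : Angle) : |sin θ| ≤ 1 := by
  induction θ using Real.Angle.induction_on
  exact (sin_coe _).symm ▸ Real.abs_sin_le_one _

end Real.Angle

namespace Circle2pi

theorem cos_zsmul_coe (k : ℤ) (x : ℝ) : Angle.cos (k • (x : Circle2pi)) = Real.cos (k * x) := by
  rw [← AddCircle.coe_zsmul, zsmul_eq_mul]
  exact Angle.cos_coe _

theorem sin_zsmul_coe (k : ℤ) (x : ℝ) : Angle.sin (k • (x : Circle2pi)) = Real.sin (k * x) := by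
  rw [← AddCircle.coe_zsmul, zsmul_eq_mul]
  exact Angle.sin_coe _

end Circle2pi

theorem intervalIntegral_ite_lt_one_neg_one {a b s : ℝ} (hs : s ∈ Set.Icc a b) :
    ∫ x in a..b, (if s < x then (1 : ℝ) else -1) = (b - s) - (s - a) := by
  have hmono : Monotone fun x : ℝ => if s < x then (1 : ℝ) else -1 := by
    intro x y hxy
    dsimp only
    split_ifs with hx hy <;> norm_num
    exact hy (hx.trans_le hxy)
  rw [← intervalIntegral.integral_add_adjacent_intervals (b := s) hmono.intervalIntegrable
    hmono.intervalIntegrable]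
  have hleft : ∫ x in a..s, (if s < x then (1 : ℝ) else -1) = ∫ _ in a..s, (-1 : ℝ) :=
    intervalIntegral.integral_congr fun x hx => if_neg (not_lt.2 (Set.uIcc_of_le hs.1 ▸ hx).2)
  have hright : ∫ x in s..b, (if s < x then (1 : ℝ) else -1) = ∫ _ in s..b, (1 : ℝ) :=
    intervalIntegral.integral_congr_ae <|
      .of_forall fun x hx => if_pos (Set.uIoc_of_le hs.2 ▸ hx).1
  rw [hleft, hright]
  simp only [intervalIntegral.integral_const, smul_eq_mul]
  ring

-- The zero angle has arc length `2π`, not `0`.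
def arcLength (q : Circle2pi) : ℝ := AddCircle.equivIoc (2 * π) 0 q

theorem arcLength_mem (q : Circle2pi) : arcLength q ∈ Set.Ioc 0 (2 * π) := by
  simpa [arcLength] using (AddCircle.equivIoc (2 * π) 0 q).2

theorem arcLength_coe_sub_coe {b x : ℝ} (hx : x ∈ Set.Ioc b (b + 2 * π)) :
    arcLength (x - b) = x - b := by
  rw [arcLength, ← AddCircle.coe_sub]
  exact AddCircle.equivIoc_coe_of_mem ⟨by linarith [hx.1], by linarith [hx.2]⟩

theorem measurable_arcLength : Measurable arcLength :=
  measurable_subtype_coe.comp (AddCircle.measurableEquivIoc (2 * π) 0).measurable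

theorem eCocycle_eq_ite (a b c : Circle2pi) :
    eCocycle a b c =
      if arcLength (c - b) < AddCircle.equivIco (2 * π) 0 (a - b) then 1 else -1 :=
  letI := Classical.dec (sbtw a b c)
  if_congr (AddCircle.sbtw_iff_equivIoc_lt_equivIco a b c) rfl rfl

theorem measurable_eCocycle :
    Measurable fun p : Circle2pi × Circle2pi × Circle2pi => eCocycle p.1 p.2.1 p.2.2 := by
  simp only [eCocycle_eq_ite]
  refine Measurable.ite (measurableSet_lt ?_ ?_) measurable_const measurable_const
  · exact measurable_arcLength.comp (by fun_prop)
  · exact measurable_subtype_coe.comp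
      ((AddCircle.measurableEquivIco (2 * π) 0).measurable.comp (by fun_prop))

theorem abs_eCocycle (a b c : Circle2pi) : |eCocycle a b c| = 1 := by
  unfold eCocycle
  split_ifs <;> norm_num

theorem eCocycle_coe_of_mem {b x : ℝ} (c : Circle2pi) (hx : x ∈ Set.Ioo b (b + 2 * π)) :
    eCocycle x b c = if b + arcLength (c - b) < x then 1 else -1 := by
  have hlift : (AddCircle.equivIco (2 * π) 0 ((x : Circle2pi) - b) : ℝ) = x - b := by
    rw [← AddCircle.coe_sub]
    exact AddCircle.equivIco_coe_of_mem ⟨by linarith [hx.1], by linarith [hx.2]⟩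
  simp only [eCocycle_eq_ite, hlift, lt_sub_iff_add_lt']

theorem integral_eCocycle_fst (b c : Circle2pi) :
    ∫ a, eCocycle a b c ∂circleMeasure = 1 - arcLength (c - b) / π := by
  induction b using QuotientAddGroup.induction_on with | H b =>
  have hℓ := arcLength_mem (c - b)
  have hstep : ∫ x in b..b + 2 * π, eCocycle x b c
      = ∫ x in b..b + 2 * π, if b + arcLength (c - b) < x then (1 : ℝ) else -1 := by
    refine intervalIntegral.integral_congr_ae ?_
    filter_upwards [Measure.ae_ne volume (b + 2 * π)] with x hne hx
    rw [Set.uIoc_of_le (by linarith [pi_pos])] at hx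
    exact eCocycle_coe_of_mem c ⟨hx.1, lt_of_le_of_ne hx.2 hne⟩
  rw [AddCircle.integral_haarAddCircle_eq_intervalIntegral _ b, hstep,
    intervalIntegral_ite_lt_one_neg_one ⟨by linarith [hℓ.1], by linarith [hℓ.2]⟩, smul_eq_mul]
  field_simp
  ring

theorem intervalIntegral_sawtooth_mul_sin {k : ℤ} (hk : k ≠ 0) (a : ℝ) :
    ∫ x in a..a + 2 * π, (1 - (x - a) / π) * Real.sin (k * x) = 2 * Real.cos (k * a) / k := by
  have hk' : (k : ℝ) ≠ 0 := Int.cast_ne_zero.mpr hk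
  -- an antiderivative, found by integrating by parts
  have hderiv : ∀ x ∈ Set.uIcc a (a + 2 * π),
      HasDerivAt
        (fun y => -((1 - (y - a) / π) * Real.cos (k * y)) / k - Real.sin (k * y) / (π * k ^ 2))
        ((1 - (x - a) / π) * Real.sin (k * x)) x := by
    intro x _
    have hcos := ((hasDerivAt_id' x).const_mul (k : ℝ)).cos
    have hsin := ((hasDerivAt_id' x).const_mul (k : ℝ)).sin
    have hlin := (((hasDerivAt_id' x).sub_const a).div_const π).const_sub 1
    refine (((hlin.mul hcos).neg.div_const (k : ℝ)).sub (hsin.div_const (π * k ^ 2))).congr_deriv ?_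
    field_simp
    ring
  have hperiod (f : ℝ → ℝ) (hf : f.Periodic (2 * π)) : f (k * (a + 2 * π)) = f (k * a) := by
    rw [mul_add]
    exact hf.int_mul k _
  rw [intervalIntegral.integral_eq_sub_of_hasDerivAt hderiv
      ((by fun_prop : Continuous _).intervalIntegrable _ _),
    hperiod _ Real.cos_periodic, hperiod _ Real.sin_periodic]
  field_simp
  ring

theorem integral_sawtooth_mul_sin {k : ℤ} (hk : k ≠ 0) (b : Circle2pi) :
    ∫ c, (1 - arcLength (c - b) / π) * Angle.sin (k • c) ∂circleMeasure
      = Angle.cos (k • b) / (k * π) := by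
  induction b using QuotientAddGroup.induction_on with | H b =>
  have hlift :
      ∫ x in b..b + 2 * π, (1 - arcLength (x - b) / π) * Angle.sin (k • (x : Circle2pi))
      = ∫ x in b..b + 2 * π, (1 - (x - b) / π) * Real.sin (k * x) := by
    refine intervalIntegral.integral_congr_ae (.of_forall fun x hx => ?_)
    rw [Set.uIoc_of_le (by linarith [pi_pos])] at hx
    rw [arcLength_coe_sub_coe hx, Circle2pi.sin_zsmul_coe]
  rw [AddCircle.integral_haarAddCircle_eq_intervalIntegral _ b, hlift,
    intervalIntegral_sawtooth_mul_sin hk, Circle2pi.cos_zsmul_coe, smul_eq_mul]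
  field_simp

theorem integral_cos_zsmul_sq {k : ℤ} (hk : k ≠ 0) :
    ∫ θ, Angle.cos (k • θ) ^ 2 ∂circleMeasure = 1 / 2 := by
  have hk' : (k : ℝ) ≠ 0 := Int.cast_ne_zero.mpr hk
  have hshift (θ : Circle2pi) :
      Angle.cos (k • (θ + ((π / (2 * k) : ℝ) : Circle2pi))) ^ 2 = Angle.sin (k • θ) ^ 2 := by
    have hquarter : (k • ((π / (2 * k) : ℝ) : Circle2pi)) = ((π / 2 : ℝ) : Circle2pi) := by
      rw [← AddCircle.coe_zsmul, zsmul_eq_mul]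
      congr 1
      field_simp
    rw [smul_add, hquarter]
    exact (congrArg (· ^ 2) (Angle.cos_add_pi_div_two _)).trans (neg_sq _)
  have hcos_eq_sin :
      ∫ θ, Angle.cos (k • θ) ^ 2 ∂circleMeasure = ∫ θ, Angle.sin (k • θ) ^ 2 ∂circleMeasure := by
    simp only [← hshift]
    exact (integral_add_right_eq_self (fun θ : Circle2pi => Angle.cos (k • θ) ^ 2) _).symm
  have hsum :
      ∫ θ, Angle.cos (k • θ) ^ 2 ∂circleMeasure + ∫ θ, Angle.sin (k • θ) ^ 2 ∂circleMeasure = 1 := by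
    have hpyth (θ : Circle2pi) : Angle.cos (k • θ) ^ 2 + Angle.sin (k • θ) ^ 2 = 1 :=
      Angle.cos_sq_add_sin_sq _
    rw [← integral_add, integral_congr_ae (.of_forall hpyth), integral_const, probReal_univ,
      one_smul]
    all_goals exact Continuous.integrable_of_hasCompactSupport (by fun_prop) (.of_compactSpace _)
  linarith

/-- `2 ∫ e(θ₀,θ₁,θ₂) cos(kθ₁) sin(kθ₂) = 1/(kπ)`. -/
theorem euler_cos_sin_value (k : ℤ) (hk : k ≠ 0) :
    2 * ∫ p : Circle2pi × Circle2pi × Circle2pi,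
        eCocycle p.1 p.2.1 p.2.2 * Real.Angle.cos (k • p.2.1) * Real.Angle.sin (k • p.2.2)
      ∂(circleMeasure.prod (circleMeasure.prod circleMeasure))
      = 1 / ((k : ℝ) * π) := by
  set f := fun p : Circle2pi × Circle2pi × Circle2pi =>
    eCocycle p.1 p.2.1 p.2.2 * Real.Angle.cos (k • p.2.1) * Real.Angle.sin (k • p.2.2)
  have hf : Integrable f (circleMeasure.prod (circleMeasure.prod circleMeasure)) := by
    refine .of_bound
      ((measurable_eCocycle.mul (by fun_prop)).mul (by fun_prop)).aestronglyMeasurable 1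
      (.of_forall fun p => ?_)
    rw [Real.norm_eq_abs, abs_mul, abs_mul, abs_eCocycle, one_mul]
    exact mul_le_one₀ (Angle.abs_cos_le_one _) (abs_nonneg _) (Angle.abs_sin_le_one _)
  have hθ₀ (q : Circle2pi × Circle2pi) : ∫ a, f (a, q) ∂circleMeasure
      = (1 - arcLength (q.2 - q.1) / π) * Angle.sin (k • q.2) * Angle.cos (k • q.1) := by
    simp only [f, integral_mul_const, integral_eCocycle_fst]
    ring
  have hθ₂ (b : Circle2pi) :
      ∫ c, (1 - arcLength (c - b) / π) * Angle.sin (k • c) * Angle.cos (k • b) ∂circleMeasure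
        = Angle.cos (k • b) ^ 2 / (k * π) := by
    rw [integral_mul_const, integral_sawtooth_mul_sin hk]
    ring
  have hg := hf.integral_prod_right
  simp only [hθ₀] at hg
  rw [integral_prod_symm f hf]
  simp only [hθ₀]
  rw [integral_prod _ hg]
  simp only [hθ₂]
  rw [integral_div, integral_cos_zsmul_sq hk]
  ring
end
end

section
/- Let k₀, k₁, k₂ be nonzero integers and let γ₀, γ₁, γ₂ be functions each equal to cos or to sin. Then ∫_{(S¹)³} e(θ₀,θ₁,θ₂) γ₀(k₀θ₀) γ₁(k₁θ₁) γ₂(k₂θ₂) dθ₀ dθ₁ dθ₂ = 0. -/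
open MeasureTheory Real
open scoped Real

noncomputable section

/-!
For pairwise distinct `a b c`, let `ℓ(a, b) ∈ (0, 2π)` be the length of the positive arc from `a`
to `b`; then `π e(a, b, c) = π + ℓ(a, c) - ℓ(a, b) - ℓ(b, c)`. As the diagonals are null, the
integral splits into four terms, in each of which one variable occurs only through its factor
`γᵢ(kᵢ θᵢ)`. That factor has mean zero, being antiperiodic under translation by `π / kᵢ`.
-/

open Set

instance : NullSingletonClass circleMeasure := by
  refine ⟨fun x => ?_⟩
  have h := AddCircle.volume_closedBall (2 * π) (x := x) 0
  rw [Metric.closedBall_zero, AddCircle.volume_eq_smul_haarAddCircle] at h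
  simpa [Real.pi_pos.not_ge] using h

theorem Function.Antiperiodic.integral_eq_zero {G E : Type*} [MeasurableSpace G] [AddGroup G]
    [MeasurableAdd G] {μ : Measure G} [μ.IsAddRightInvariant] [NormedAddCommGroup E]
    [NormedSpace ℝ E] {f : G → E} {c : G} (hf : Function.Antiperiodic f c) :
    ∫ x, f x ∂μ = 0 := by
  have h := integral_add_right_eq_self (μ := μ) f c
  simp only [hf _, integral_neg] at h
  have h2 : (2 : ℝ) • ∫ x, f x ∂μ = 0 := by
    rw [two_smul]
    nth_rewrite 1 [← h]
    exact neg_add_cancel _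
  exact (smul_eq_zero.mp h2).resolve_left two_ne_zero

theorem Function.Antiperiodic.comp_zsmul {p c : ℝ} {f : AddCircle p → ℝ}
    (hf : Function.Antiperiodic f c) {k : ℤ} (hk : k ≠ 0) :
    Function.Antiperiodic (fun θ => f (k • θ)) ((c / k : ℝ) : AddCircle p) := by
  intro θ
  show f (k • (θ + _)) = -f (k • θ)
  rw [smul_add, ← QuotientAddGroup.mk_zsmul, zsmul_eq_mul,
    mul_div_cancel₀ _ (Int.cast_ne_zero.mpr hk)]
  exact hf _

namespace AddCircle

variable {p : ℝ} [Fact (0 < p)]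

def arcLength (a b : AddCircle p) : ℝ := equivIco p 0 (b - a)

lemma arcLength_mem_Ico (a b : AddCircle p) : arcLength a b ∈ Ico 0 p := by
  have h := (equivIco p 0 (b - a)).2
  simp only [zero_add] at h
  exact h

lemma coe_arcLength (a b : AddCircle p) : (arcLength a b : AddCircle p) = b - a :=
  coe_equivIco

lemma arcLength_eq {a b : AddCircle p} {t : ℝ} (h : b - a = t) (ht : t ∈ Ico 0 p) :
    arcLength a b = t := by
  rw [arcLength, h, equivIco_coe_of_mem (by simpa using ht)]

lemma arcLength_pos {a b : AddCircle p} (h : a ≠ b) : 0 < arcLength a b := by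
  refine (arcLength_mem_Ico a b).1.lt_of_ne fun h0 => h ?_
  have := coe_arcLength a b
  rw [← h0, coe_zero] at this
  exact (sub_eq_zero.mp this.symm).symm

lemma measurable_arcLength :
    Measurable fun q : AddCircle p × AddCircle p => arcLength q.1 q.2 :=
  measurable_subtype_coe.comp <|
    (measurableEquivIco p 0).measurable.comp (measurable_snd.sub measurable_fst)

lemma sbtw_iff_arcLength_lt {a b c : AddCircle p} (hab : a ≠ b) (hac : a ≠ c) :
    sbtw a b c ↔ arcLength a b < arcLength a c := by
  have hp := (Fact.out : 0 < p)
  obtain ⟨α, rfl⟩ := QuotientAddGroup.mk_surjective a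
  set x := arcLength (α : AddCircle p) b
  set y := arcLength (α : AddCircle p) c
  have hx := arcLength_mem_Ico (α : AddCircle p) b
  have hy := arcLength_mem_Ico (α : AddCircle p) c
  have hx0 := arcLength_pos hab
  have hy0 := arcLength_pos hac
  have hb : b = ((α + x : ℝ) : AddCircle p) := by
    rw [coe_add, coe_arcLength]; abel
  have hc : c = ((α + y : ℝ) : AddCircle p) := by
    rw [coe_add, coe_arcLength]; abel
  rw [hb, hc, sbtw_iff_btw_not_btw, QuotientAddGroup.btw_coe_iff, QuotientAddGroup.btw_coe_iff,
    (toIcoMod_eq_self hp).mpr ⟨by linarith, by linarith [hx.2]⟩,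
    (toIocMod_eq_self hp).mpr ⟨by linarith, by linarith [hy.2]⟩,
    ← toIocMod_add_right hp, (toIocMod_eq_self hp).mpr ⟨by linarith [hy.2], by linarith⟩]
  rcases lt_or_ge x y with hxy | hxy
  · rw [← toIcoMod_add_right hp, (toIcoMod_eq_self hp).mpr ⟨by linarith [hy.2], by linarith⟩]
    exact ⟨fun _ => hxy, fun _ => ⟨by linarith, by linarith⟩⟩
  · rw [(toIcoMod_eq_self hp).mpr ⟨by linarith, by linarith [hx.2]⟩]
    exact ⟨fun h => absurd (by linarith [hx.2]) h.2, fun h => by linarith⟩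

open Classical in
lemma arcLength_add_arcLength {a b c : AddCircle p} (hab : a ≠ b) (hbc : b ≠ c) (hac : a ≠ c) :
    arcLength a b + arcLength b c = arcLength a c + if sbtw a b c then 0 else p := by
  have hx := arcLength_mem_Ico a b
  have hy := arcLength_mem_Ico a c
  have hcb : c - b = ((arcLength a c - arcLength a b : ℝ) : AddCircle p) := by
    rw [coe_sub, coe_arcLength, coe_arcLength]; abel
  rw [sbtw_iff_arcLength_lt hab hac]
  split_ifs with hxy
  · rw [arcLength_eq hcb ⟨by linarith, by linarith [hy.2, hx.1]⟩]; ring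
  · have hne : arcLength a b ≠ arcLength a c := fun h =>
      hbc (sub_left_inj.mp (by rw [← coe_arcLength, ← coe_arcLength, h]))
    have hcb' : c - b = ((arcLength a c - arcLength a b + p : ℝ) : AddCircle p) := by
      rw [coe_add_period, hcb]
    rw [arcLength_eq hcb' ⟨by linarith [hx.2, hy.1], by
      linarith [lt_of_le_of_ne (not_lt.mp hxy) hne.symm]⟩]
    ring

end AddCircle

lemma eCocycle_eq {a b c : Circle2pi} (hab : a ≠ b) (hbc : b ≠ c) (hac : a ≠ c) :
    eCocycle a b c =
      1 + (AddCircle.arcLength a c - AddCircle.arcLength a b - AddCircle.arcLength b c) / π := by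
  have h := AddCircle.arcLength_add_arcLength hab hbc hac
  unfold eCocycle
  split_ifs at h ⊢ <;> field_simp <;> linarith

section ProductMeasure

variable {α β : Type*} [MeasurableSpace α] [MeasurableSpace β]

lemma ae_prod_pairwise_ne [MeasurableEq α] (μ : Measure α) (ν ρ : Measure α) [SFinite ν]
    [SFinite ρ] [NullSingletonClass ν] [NullSingletonClass ρ] :
    ∀ᵐ p ∂μ.prod (ν.prod ρ), p.1 ≠ p.2.1 ∧ p.2.1 ≠ p.2.2 ∧ p.1 ≠ p.2.2 := by
  rw [Measure.ae_prod_iff_ae_ae (by measurability)]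
  refine ae_of_all _ fun a => ?_
  rw [Measure.ae_prod_iff_ae_ae (by measurability)]
  filter_upwards [ν.ae_ne a] with b hb
  filter_upwards [ρ.ae_ne a, ρ.ae_ne b] with c hca hcb
  exact ⟨Ne.symm hb, Ne.symm hcb, Ne.symm hca⟩

lemma integral_prod_eq_zero_of_forall_integral_eq_zero {E : Type*} [NormedAddCommGroup E]
    [NormedSpace ℝ E] {μ : Measure α} {ν : Measure β} [SFinite μ] [SFinite ν] {F : α × β → E}
    (hF : Integrable F (μ.prod ν)) (h : ∀ a, ∫ b, F (a, b) ∂ν = 0) :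
    ∫ z, F z ∂μ.prod ν = 0 := by
  simp [integral_prod F hF, h]

end ProductMeasure

section TripleIntegral

open AddCircle

variable {g₀ g₁ g₂ : Circle2pi → ℝ}

lemma integrable_arcLength_mul (hc₀ : Continuous g₀) (hc₁ : Continuous g₁)
    (hc₂ : Continuous g₂) {f : Circle2pi × Circle2pi × Circle2pi → Circle2pi × Circle2pi}
    (hf : Measurable f) :
    Integrable (fun p => arcLength (f p).1 (f p).2 * (g₀ p.1 * g₁ p.2.1 * g₂ p.2.2))
      (circleMeasure.prod (circleMeasure.prod circleMeasure)) := by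
  have hP : Continuous fun p : Circle2pi × Circle2pi × Circle2pi => g₀ p.1 * g₁ p.2.1 * g₂ p.2.2 :=
    by fun_prop
  refine (hP.integrable_of_hasCompactSupport (.of_compactSpace _)).bdd_mul (c := 2 * π)
    (measurable_arcLength.comp hf).aestronglyMeasurable (ae_of_all _ fun p => ?_)
  have h := arcLength_mem_Ico (f p).1 (f p).2
  rw [Real.norm_eq_abs, abs_of_nonneg h.1]
  exact h.2.le

lemma eCocycle_mul_ae_eq :
    (fun p : Circle2pi × Circle2pi × Circle2pi =>
        eCocycle p.1 p.2.1 p.2.2 * g₀ p.1 * g₁ p.2.1 * g₂ p.2.2)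
      =ᵐ[circleMeasure.prod (circleMeasure.prod circleMeasure)] fun p =>
        g₀ p.1 * g₁ p.2.1 * g₂ p.2.2
          + π⁻¹ * (arcLength p.1 p.2.2 * (g₀ p.1 * g₁ p.2.1 * g₂ p.2.2))
          - π⁻¹ * (arcLength p.1 p.2.1 * (g₀ p.1 * g₁ p.2.1 * g₂ p.2.2))
          - π⁻¹ * (arcLength p.2.1 p.2.2 * (g₀ p.1 * g₁ p.2.1 * g₂ p.2.2)) := by
  filter_upwards [ae_prod_pairwise_ne _ _ _] with p ⟨h01, h12, h02⟩
  rw [eCocycle_eq h01 h12 h02]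
  ring

lemma integral_eCocycle_mul_eq_zero (hc₀ : Continuous g₀) (hc₁ : Continuous g₁)
    (hc₂ : Continuous g₂) (h₀ : ∫ θ, g₀ θ ∂circleMeasure = 0)
    (h₁ : ∫ θ, g₁ θ ∂circleMeasure = 0) (h₂ : ∫ θ, g₂ θ ∂circleMeasure = 0) :
    ∫ p : Circle2pi × Circle2pi × Circle2pi,
        eCocycle p.1 p.2.1 p.2.2 * g₀ p.1 * g₁ p.2.1 * g₂ p.2.2
      ∂(circleMeasure.prod (circleMeasure.prod circleMeasure)) = 0 := by
  set μ := circleMeasure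
  set P : Circle2pi × Circle2pi × Circle2pi → ℝ := fun p => g₀ p.1 * g₁ p.2.1 * g₂ p.2.2
  have hP : Integrable P (μ.prod (μ.prod μ)) :=
    (by fun_prop : Continuous P).integrable_of_hasCompactSupport (.of_compactSpace _)
  have hI₀₁ : Integrable (fun p => arcLength p.1 p.2.1 * P p) (μ.prod (μ.prod μ)) :=
    integrable_arcLength_mul hc₀ hc₁ hc₂ (measurable_fst.prodMk measurable_snd.fst)
  have hI₀₂ : Integrable (fun p => arcLength p.1 p.2.2 * P p) (μ.prod (μ.prod μ)) :=
    integrable_arcLength_mul hc₀ hc₁ hc₂ (measurable_fst.prodMk measurable_snd.snd)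
  have hI₁₂ : Integrable (fun p => arcLength p.2.1 p.2.2 * P p) (μ.prod (μ.prod μ)) :=
    integrable_arcLength_mul hc₀ hc₁ hc₂ (measurable_snd.fst.prodMk measurable_snd.snd)
  have hP0 : ∫ p, P p ∂μ.prod (μ.prod μ) = 0 := by
    simpa only [P, mul_assoc, h₀, zero_mul] using
      integral_prod_mul (μ := μ) (ν := μ.prod μ) g₀ (fun q => g₁ q.1 * g₂ q.2)
  have hA₁₂ : ∫ p, arcLength p.2.1 p.2.2 * P p ∂μ.prod (μ.prod μ) = 0 := by
    rw [← zero_mul (∫ q, arcLength q.1 q.2 * g₁ q.1 * g₂ q.2 ∂μ.prod μ), ← h₀,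
      ← integral_prod_mul]
    congr 1; ext p; ring
  have hA₀₁ : ∫ p, arcLength p.1 p.2.1 * P p ∂μ.prod (μ.prod μ) = 0 := by
    refine integral_prod_eq_zero_of_forall_integral_eq_zero hI₀₁ fun a => ?_
    rw [← mul_zero (∫ b, arcLength a b * g₀ a * g₁ b ∂μ), ← h₂, ← integral_prod_mul]
    congr 1; ext p; ring
  have hA₀₂ : ∫ p, arcLength p.1 p.2.2 * P p ∂μ.prod (μ.prod μ) = 0 := by
    refine integral_prod_eq_zero_of_forall_integral_eq_zero hI₀₂ fun a => ?_
    rw [← zero_mul (∫ c, arcLength a c * g₀ a * g₂ c ∂μ), ← h₁, ← integral_prod_mul]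
    congr 1; ext p; ring
  rw [integral_congr_ae eCocycle_mul_ae_eq, integral_sub, integral_sub, integral_add,
    integral_const_mul, integral_const_mul, integral_const_mul, hP0, hA₀₁, hA₀₂, hA₁₂]
  · simp
  exacts [hP, hI₀₂.const_mul _, hP.add (hI₀₂.const_mul _), hI₀₁.const_mul _,
    (hP.add (hI₀₂.const_mul _)).sub (hI₀₁.const_mul _), hI₁₂.const_mul _]

end TripleIntegral

lemma continuous_and_antiperiodic_of_eq_cos_or_sin {γ : Circle2pi → ℝ}
    (hγ : γ = Real.Angle.cos ∨ γ = Real.Angle.sin) :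
    Continuous γ ∧ Function.Antiperiodic γ π := by
  rcases hγ with rfl | rfl
  exacts [⟨Real.Angle.continuous_cos, Real.Angle.cos_antiperiodic⟩,
    ⟨Real.Angle.continuous_sin, Real.Angle.sin_antiperiodic⟩]

/-- integrating `e` against three trigonometric functions gives zero. -/
theorem euler_three_trig_vanish (k₀ k₁ k₂ : ℤ) (h₀ : k₀ ≠ 0) (h₁ : k₁ ≠ 0) (h₂ : k₂ ≠ 0)
    (γ₀ γ₁ γ₂ : Circle2pi → ℝ)
    (hγ₀ : γ₀ = Real.Angle.cos ∨ γ₀ = Real.Angle.sin)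
    (hγ₁ : γ₁ = Real.Angle.cos ∨ γ₁ = Real.Angle.sin)
    (hγ₂ : γ₂ = Real.Angle.cos ∨ γ₂ = Real.Angle.sin) :
    ∫ p : Circle2pi × Circle2pi × Circle2pi,
        eCocycle p.1 p.2.1 p.2.2 * γ₀ (k₀ • p.1) * γ₁ (k₁ • p.2.1) * γ₂ (k₂ • p.2.2)
      ∂(circleMeasure.prod (circleMeasure.prod circleMeasure)) = 0 := by
  have hmode {k : ℤ} (hk : k ≠ 0) {γ : Circle2pi → ℝ}
      (hγ : γ = Real.Angle.cos ∨ γ = Real.Angle.sin) :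
      Continuous (fun θ : Circle2pi => γ (k • θ)) ∧ ∫ θ, γ (k • θ) ∂circleMeasure = 0 := by
    obtain ⟨hc, ha⟩ := continuous_and_antiperiodic_of_eq_cos_or_sin hγ
    exact ⟨hc.comp (continuous_zsmul k), (ha.comp_zsmul hk).integral_eq_zero⟩
  obtain ⟨hc₀, hz₀⟩ := hmode h₀ hγ₀
  obtain ⟨hc₁, hz₁⟩ := hmode h₁ hγ₁
  obtain ⟨hc₂, hz₂⟩ := hmode h₂ hγ₂
  exact integral_eCocycle_mul_eq_zero hc₀ hc₁ hc₂ hz₀ hz₁ hz₂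
end
end

section
/- Let g₁, g₂ : ℝ → ℝ be continuous 2π-periodic functions with ∫₀^{2π} g₁(t) dt = ∫₀^{2π} g₂(t) dt = 0, regarded as functions on S¹, and let F₁ : ℝ → ℝ be defined by F₁(t) = (1/2π) ∫₀^t g₁(s) ds (which is 2π-periodic since g₁ has zero mean, hence defines a function on S¹). Then ∫_{(S¹)³} e(θ₀,θ₁,θ₂) g₁(θ₁) g₂(θ₂) dθ₀ dθ₁ dθ₂ = 2 ∫_{S¹} F₁(θ) g₂(θ) dθ = (1/π) ∫₀^{2π} F₁(t) g₂(t) dt. -/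
/-!
Let `arcLen (b - a) ∈ [0, 2π)` be the length of the positive arc from `a` to `b`. For pairwise
distinct `a, b, c` the arcs `a → b → c → a` wind once around the circle if `(a, b, c)` is
positively ordered and twice otherwise, so almost everywhere
`e(a, b, c) = 3 - (arcLen (b - a) + arcLen (c - b) + arcLen (a - c)) / π`.
Averaging over `a`, each arc through `a` has mean `π`, which leaves `1 - arcLen (c - b) / π`.
The constant integrates to zero against `g₁(b) g₂(c)`. Cutting `∫ arcLen (c - b) g₁(b) db` at
`b = c` shows that it is a constant minus `2π F₁(c)`, and as `g₂` has mean zero only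
`2 ∫ F₁ g₂` survives.
-/

open MeasureTheory Real
open scoped Real

noncomputable section

theorem MeasureTheory.Measure.ae_prod_fst_ne {α β : Type*} [MeasurableSpace α]
    [MeasurableSpace β] [MeasurableEq α] {μ : Measure α} {ν : Measure β} [NullSingletonClass μ]
    [SFinite μ] [SFinite ν] {f : β → α} (hf : Measurable f) : ∀ᵐ p ∂μ.prod ν, p.1 ≠ f p.2 := by
  simp only [ae_iff, not_not]
  rw [Measure.prod_apply_symm (measurableSet_eq_fun (f := Prod.fst) (g := fun p : α × β => f p.2)
    measurable_fst (hf.comp measurable_snd))]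
  simp [Set.preimage]

theorem MeasureTheory.Measure.ae_pairwise_ne_prod_prod {α : Type*} [MeasurableSpace α]
    [MeasurableEq α] {μ : Measure α} [NullSingletonClass μ] [SFinite μ] :
    ∀ᵐ p ∂μ.prod (μ.prod μ), p.1 ≠ p.2.1 ∧ p.2.1 ≠ p.2.2 ∧ p.2.2 ≠ p.1 := by
  filter_upwards [ae_prod_fst_ne measurable_fst,
    quasiMeasurePreserving_snd.ae (ae_prod_fst_ne measurable_id), ae_prod_fst_ne measurable_snd]
    with p h₁ h₂ h₃
  exact ⟨h₁, h₂, h₃.symm⟩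

theorem intervalIntegral_toIcoMod_sub_mul {T : ℝ} (hT : 0 < T) {g : ℝ → ℝ}
    (hg : Continuous g) (hg₀ : ∫ y in 0..T, g y = 0) {z : ℝ} (hz : z ∈ Set.Icc 0 T) :
    ∫ y in 0..T, toIcoMod hT 0 (z - y) * g y =
      -(∫ y in 0..T, y * g y) - T * ∫ y in 0..z, g y := by
  have h₁ : Set.EqOn (fun y => (z - y) * g y) (fun y => toIcoMod hT 0 (z - y) * g y)
      (Set.Ioo 0 z) := fun y hy => by
    simp only
    rw [(toIcoMod_eq_self hT).mpr ⟨by linarith [hy.2], by linarith [hy.1, hz.2]⟩]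
  have h₂ : Set.EqOn (fun y => (z - y) * g y + T * g y)
      (fun y => toIcoMod hT 0 (z - y) * g y) (Set.Ioo z T) := fun y hy => by
    simp only
    rw [← toIcoMod_add_right,
      (toIcoMod_eq_self hT).mpr ⟨by linarith [hy.2, hz.1], by linarith [hy.1]⟩]
    ring
  have hint : ∀ a b, IntervalIntegrable (fun y => (z - y) * g y) volume a b :=
    (by fun_prop : Continuous fun y => (z - y) * g y).intervalIntegrable
  have hint' : ∀ a b, IntervalIntegrable (fun y => (z - y) * g y + T * g y) volume a b :=
    (by fun_prop : Continuous fun y => (z - y) * g y + T * g y).intervalIntegrable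
  calc ∫ y in 0..T, toIcoMod hT 0 (z - y) * g y
      = (∫ y in 0..z, toIcoMod hT 0 (z - y) * g y) +
          ∫ y in z..T, toIcoMod hT 0 (z - y) * g y :=
        (intervalIntegral.integral_add_adjacent_intervals
          ((hint 0 z).congr_uIoo (Set.uIoo_of_le hz.1 ▸ h₁))
          ((hint' z T).congr_uIoo (Set.uIoo_of_le hz.2 ▸ h₂))).symm
    _ = (∫ y in 0..z, (z - y) * g y) + ∫ y in z..T, ((z - y) * g y + T * g y) := by
        rw [intervalIntegral.integral_congr_Ioo_of_le hz.1 h₁.symm,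
          intervalIntegral.integral_congr_Ioo_of_le hz.2 h₂.symm]
    _ = (∫ y in 0..T, (z - y) * g y) + T * ((∫ y in 0..T, g y) - ∫ y in 0..z, g y) := by
        rw [intervalIntegral.integral_add (hint z T) ((hg.const_mul T).intervalIntegrable _ _),
          ← add_assoc, intervalIntegral.integral_add_adjacent_intervals (hint 0 z) (hint z T),
          intervalIntegral.integral_const_mul, intervalIntegral.integral_interval_sub_left
            (hg.intervalIntegrable 0 T) (hg.intervalIntegrable 0 z)]
    _ = -(∫ y in 0..T, y * g y) - T * ∫ y in 0..z, g y := by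
        simp only [sub_mul]
        rw [intervalIntegral.integral_sub ((hg.const_mul z).intervalIntegrable _ _)
            ((by fun_prop : Continuous fun y => y * g y).intervalIntegrable _ _),
          intervalIntegral.integral_const_mul, hg₀]
        ring

namespace AddCircle

theorem continuous_of_forall_coe_eq {T : ℝ} {X : Type*} [TopologicalSpace X]
    {G : AddCircle T → X} {g : ℝ → X} (hg : Continuous g) (hG : ∀ t : ℝ, G t = g t) :
    Continuous G :=
  (QuotientAddGroup.isQuotientMap_mk _).continuous_iff.mpr (by convert hg using 1; ext; exact hG _)

variable {T : ℝ} [hT : Fact (0 < T)]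

instance : NullSingletonClass (haarAddCircle (T := T)) where
  measure_singleton x := by
    have hvol : volume ({x} : Set (AddCircle T)) = 0 := by
      simpa [hT.out.le] using volume_closedBall T (x := x) 0
    rw [volume_eq_smul_haarAddCircle, Measure.smul_apply, smul_eq_mul] at hvol
    simpa [hT.out, not_le.mpr hT.out] using hvol

theorem integral_haarAddCircle_eq_intervalIntegral_s15 (f : AddCircle T → ℝ) :
    ∫ q, f q ∂haarAddCircle = T⁻¹ * ∫ t in 0..T, f t := by
  rw [integral_haarAddCircle, ← AddCircle.intervalIntegral_preimage T 0 f, zero_add, smul_eq_mul]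

theorem _root_.Continuous.integrable_haarAddCircle {G : AddCircle T → ℝ} (hG : Continuous G) :
    Integrable G haarAddCircle :=
  hG.integrable_of_hasCompactSupport (.of_compactSpace G)

def arcLen (q : AddCircle T) : ℝ := equivIco T 0 q

theorem arcLen_coe (x : ℝ) : arcLen (x : AddCircle T) = toIcoMod hT.out 0 x := rfl

theorem coe_arcLen (q : AddCircle T) : (arcLen q : AddCircle T) = q :=
  coe_equivIco

theorem arcLen_mem_Ico (q : AddCircle T) : arcLen q ∈ Set.Ico 0 T := by
  simpa [arcLen] using (equivIco T 0 q).2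

theorem norm_arcLen_le (q : AddCircle T) : ‖arcLen q‖ ≤ T := by
  rw [Real.norm_of_nonneg (arcLen_mem_Ico q).1]
  exact (arcLen_mem_Ico q).2.le

@[fun_prop]
theorem measurable_arcLen : Measurable (arcLen (T := T)) :=
  measurable_subtype_coe.comp (measurableEquivIco T 0).measurable

theorem arcLen_eq_zero_iff {q : AddCircle T} : arcLen q = 0 ↔ q = 0 := by
  refine ⟨fun h => by rw [← coe_arcLen q, h, coe_zero], ?_⟩
  rintro rfl
  exact toIcoMod_apply_left _ 0

theorem arcLen_pos {q : AddCircle T} (hq : q ≠ 0) : 0 < arcLen q :=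
  (arcLen_mem_Ico q).1.lt_of_ne' (arcLen_eq_zero_iff.not.mpr hq)

theorem arcLen_neg (q : AddCircle T) : arcLen (-q) = T - equivIoc T 0 q := by
  induction q using QuotientAddGroup.induction_on with
  | H x => rw [← coe_neg, arcLen_coe, toIcoMod_neg, neg_zero]; rfl

theorem equivIoc_eq_arcLen {q : AddCircle T} (hq : q ≠ 0) :
    (equivIoc T 0 q : ℝ) = arcLen q := by
  induction q using QuotientAddGroup.induction_on with
  | H x =>
    refine ((AddCommGroup.not_modEq_iff_toIcoMod_eq_toIocMod hT.out).mp fun h => hq ?_).symm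
    exact (AddCommGroup.modEq_iff_eq_mod_zmultiples.mp h).symm

theorem arcLen_add_arcLen_neg {q : AddCircle T} (hq : q ≠ 0) : arcLen q + arcLen (-q) = T := by
  rw [arcLen_neg, equivIoc_eq_arcLen hq, add_sub_cancel]

theorem btw_iff_arcLen (a b c : AddCircle T) :
    btw a b c ↔ arcLen (b - a) + arcLen (a - c) ≤ T := by
  change arcLen (b - a) ≤ equivIoc T 0 (c - a) ↔ _
  rw [show (equivIoc T 0 (c - a) : ℝ) = T - arcLen (a - c) by
      rw [← neg_sub c a, arcLen_neg]; ring,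
    le_sub_iff_add_le]

def arcLenSum (a b c : AddCircle T) : ℝ := arcLen (b - a) + arcLen (c - b) + arcLen (a - c)

theorem arcLenSum_eq_or {a b c : AddCircle T} (hab : a ≠ b) (hbc : b ≠ c) (hca : c ≠ a) :
    arcLenSum a b c = T ∨ arcLenSum a b c = 2 * T := by
  have hA := arcLen_pos (sub_ne_zero.mpr hab.symm)
  have hB := arcLen_pos (sub_ne_zero.mpr hbc.symm)
  have hC := arcLen_pos (sub_ne_zero.mpr hca.symm)
  have hA' := (arcLen_mem_Ico (b - a)).2
  have hB' := (arcLen_mem_Ico (c - b)).2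
  have hC' := (arcLen_mem_Ico (a - c)).2
  obtain ⟨n, hn⟩ := (coe_eq_zero_iff T).mp <| show (arcLenSum a b c : AddCircle T) = 0 by
    rw [arcLenSum, coe_add, coe_add, coe_arcLen, coe_arcLen, coe_arcLen]; abel
  rw [zsmul_eq_mul, arcLenSum] at hn
  have hTpos := hT.out
  have h₀ : 0 < n := by exact_mod_cast (show (0 : ℝ) < n by nlinarith)
  have h₃ : n < 3 := by exact_mod_cast (show (n : ℝ) < 3 by nlinarith)
  obtain rfl | rfl : n = 1 ∨ n = 2 := by omega
  · exact .inl (by simpa [arcLenSum] using hn.symm)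
  · exact .inr (by simpa [arcLenSum] using hn.symm)

theorem sbtw_iff_arcLenSum_eq {a b c : AddCircle T} (hab : a ≠ b) (hbc : b ≠ c)
    (hca : c ≠ a) : sbtw a b c ↔ arcLenSum a b c = T := by
  have hA := arcLen_pos (sub_ne_zero.mpr hab.symm)
  have hB := arcLen_pos (sub_ne_zero.mpr hbc.symm)
  have hB' := (arcLen_mem_Ico (c - b)).2
  have hBneg : arcLen (b - c) = T - arcLen (c - b) := by
    rw [← neg_sub c b]
    exact eq_sub_of_add_eq' (arcLen_add_arcLen_neg (sub_ne_zero.mpr hbc.symm))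
  have hCneg : arcLen (c - a) = T - arcLen (a - c) := by
    rw [← neg_sub a c]
    exact eq_sub_of_add_eq' (arcLen_add_arcLen_neg (sub_ne_zero.mpr hca.symm))
  have h := arcLenSum_eq_or hab hbc hca
  unfold arcLenSum at h ⊢
  rw [sbtw_iff_btw_not_btw, btw_iff_arcLen, btw_iff_arcLen, hBneg, hCneg]
  rcases h with h | h
  · exact iff_of_true ⟨by linarith, by linarith⟩ h
  · exact iff_of_false (fun hs => by linarith [hs.1]) (by linarith [hT.out])

theorem arcLenSum_mem_Ico (a b c : AddCircle T) : arcLenSum a b c ∈ Set.Ico 0 (3 * T) := by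
  have h₁ := arcLen_mem_Ico (b - a)
  have h₂ := arcLen_mem_Ico (c - b)
  have h₃ := arcLen_mem_Ico (a - c)
  unfold arcLenSum
  exact ⟨by linarith [h₁.1, h₂.1, h₃.1], by linarith [h₁.2, h₂.2, h₃.2]⟩

theorem measurable_arcLenSum :
    Measurable fun p : AddCircle T × AddCircle T × AddCircle T => arcLenSum p.1 p.2.1 p.2.2 := by
  unfold arcLenSum
  fun_prop

theorem integrable_arcLen_comp {α : Type*} [MeasurableSpace α] {μ : Measure α}
    [IsFiniteMeasure μ] {φ : α → AddCircle T} (hφ : Measurable φ) :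
    Integrable (fun x => arcLen (φ x)) μ :=
  .of_bound (measurable_arcLen.comp hφ).aestronglyMeasurable T
    (ae_of_all _ fun _ => norm_arcLen_le _)

theorem _root_.MeasureTheory.Integrable.arcLen_sub_mul {μ : Measure (AddCircle T × AddCircle T)}
    {f : AddCircle T × AddCircle T → ℝ} (hf : Integrable f μ) :
    Integrable (fun q => arcLen (q.2 - q.1) * f q) μ :=
  hf.bdd_mul (measurable_arcLen.comp (by fun_prop)).aestronglyMeasurable
    (ae_of_all _ fun _ => norm_arcLen_le _)

theorem integral_arcLen : ∫ q, arcLen q ∂(haarAddCircle (T := T)) = T / 2 := by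
  rw [integral_haarAddCircle_eq_intervalIntegral_s15,
    intervalIntegral.integral_congr_Ioo_of_le hT.out.le (g := fun t => t) fun t ht => ?_,
    integral_id]
  · field_simp [hT.out.ne']
    ring
  · exact (toIcoMod_eq_self hT.out).mpr ⟨ht.1.le, by simpa using ht.2⟩

theorem integral_arcLen_sub_left (b : AddCircle T) :
    ∫ a, arcLen (b - a) ∂haarAddCircle = T / 2 :=
  (integral_sub_left_eq_self arcLen _ b).trans integral_arcLen

theorem integral_arcLen_sub_right (c : AddCircle T) :
    ∫ a, arcLen (a - c) ∂haarAddCircle = T / 2 :=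
  (integral_sub_right_eq_self (μ := haarAddCircle) arcLen c).trans integral_arcLen

theorem integrable_arcLenSum (b c : AddCircle T) :
    Integrable (fun a => arcLenSum a b c) haarAddCircle :=
  ((integrable_arcLen_comp (by fun_prop)).add (integrable_const _)).add
    (integrable_arcLen_comp (by fun_prop))

theorem integral_arcLenSum (b c : AddCircle T) :
    ∫ a, arcLenSum a b c ∂haarAddCircle = T + arcLen (c - b) := by
  have h₁ : Integrable (fun a => arcLen (b - a)) haarAddCircle :=
    integrable_arcLen_comp (by fun_prop)
  have h₃ : Integrable (fun a => arcLen (a - c)) haarAddCircle :=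
    integrable_arcLen_comp (by fun_prop)
  unfold arcLenSum
  rw [integral_add (f := fun a => arcLen (b - a) + arcLen (c - b))
      (h₁.add (integrable_const _)) h₃,
    integral_add h₁ (integrable_const _), integral_const, integral_arcLen_sub_left,
    integral_arcLen_sub_right]
  simp only [probReal_univ, smul_eq_mul, one_mul]
  ring

theorem integral_arcLen_sub_mul {g : ℝ → ℝ} {G F : AddCircle T → ℝ} (hg : Continuous g)
    (hg₀ : ∫ y in 0..T, g y = 0) (hG : ∀ t : ℝ, G t = g t)
    (hF : ∀ t : ℝ, F t = T⁻¹ * ∫ s in 0..t, g s) (c : AddCircle T) :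
    ∫ b, arcLen (c - b) * G b ∂haarAddCircle =
      -T⁻¹ * (∫ y in 0..T, y * g y) - T * F c := by
  obtain ⟨z, hz, rfl⟩ : ∃ z ∈ Set.Icc 0 T, (z : AddCircle T) = c :=
    ⟨arcLen c, Set.Ico_subset_Icc_self (arcLen_mem_Ico c), coe_arcLen c⟩
  simp only [integral_haarAddCircle_eq_intervalIntegral_s15, ← coe_sub, arcLen_coe, hG, hF,
    intervalIntegral_toIcoMod_sub_mul hT.out hg hg₀ hz]
  field_simp [hT.out.ne']

theorem integral_arcLen_sub_mul_mul {g : ℝ → ℝ} {G₁ G₂ F : AddCircle T → ℝ}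
    (hg : Continuous g) (hg₀ : ∫ y in 0..T, g y = 0) (hG₁ : ∀ t : ℝ, G₁ t = g t)
    (hF : ∀ t : ℝ, F t = T⁻¹ * ∫ s in 0..t, g s) (hG₂ : Continuous G₂)
    (hG₂₀ : ∫ c, G₂ c ∂haarAddCircle = 0) :
    ∫ q, arcLen (q.2 - q.1) * (G₁ q.1 * G₂ q.2) ∂(haarAddCircle.prod haarAddCircle) =
      -T * ∫ c, F c * G₂ c ∂haarAddCircle := by
  have hG₁c : Continuous G₁ := continuous_of_forall_coe_eq hg hG₁
  have hFc : Continuous F := continuous_of_forall_coe_eq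
    (continuous_const.mul (intervalIntegral.continuous_primitive hg.intervalIntegrable 0)) hF
  have hFG₂ : Integrable (fun c => F c * G₂ c) haarAddCircle :=
    (hFc.mul hG₂).integrable_haarAddCircle
  have hint : Integrable (fun q : AddCircle T × AddCircle T => G₁ q.1 * G₂ q.2)
      (haarAddCircle.prod haarAddCircle) :=
    (hG₁c.fst'.mul hG₂.snd').integrable_of_hasCompactSupport (.of_compactSpace _)
  calc ∫ q, arcLen (q.2 - q.1) * (G₁ q.1 * G₂ q.2) ∂(haarAddCircle.prod haarAddCircle)
      = ∫ c, (∫ b, arcLen (c - b) * G₁ b ∂haarAddCircle) * G₂ c ∂haarAddCircle := by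
        rw [integral_prod_symm _ hint.arcLen_sub_mul]
        simp only [← integral_mul_const, mul_assoc]
    _ = ∫ c, (-T⁻¹ * (∫ y in 0..T, y * g y)) * G₂ c - T * (F c * G₂ c)
          ∂haarAddCircle := by
        congr with c
        rw [integral_arcLen_sub_mul hg hg₀ hG₁ hF]
        ring
    _ = -T * ∫ c, F c * G₂ c ∂haarAddCircle := by
        rw [integral_sub (hG₂.integrable_haarAddCircle.const_mul _) (hFG₂.const_mul T),
          integral_const_mul, integral_const_mul, hG₂₀]
        ring

end AddCircle

open AddCircle

theorem eCocycle_eq_three_sub {a b c : Circle2pi} (hab : a ≠ b) (hbc : b ≠ c) (hca : c ≠ a) :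
    eCocycle a b c = 3 - arcLenSum a b c / π := by
  have hsbtw := sbtw_iff_arcLenSum_eq hab hbc hca
  rcases arcLenSum_eq_or hab hbc hca with h | h
  · rw [eCocycle, if_pos (hsbtw.mpr h), h]
    field_simp
    ring
  · rw [eCocycle, if_neg fun hs => by linarith [pi_pos, hsbtw.mp hs], h]
    field_simp
    ring

theorem integral_eCocycle_mul (f : Circle2pi × Circle2pi → ℝ)
    (hf : Integrable f (circleMeasure.prod circleMeasure)) :
    ∫ p, eCocycle p.1 p.2.1 p.2.2 * f p.2
        ∂(circleMeasure.prod (circleMeasure.prod circleMeasure)) =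
      ∫ q, (1 - arcLen (q.2 - q.1) / π) * f q ∂(circleMeasure.prod circleMeasure) := by
  have hΦ : Integrable (fun p => (3 - arcLenSum p.1 p.2.1 p.2.2 / π) * f p.2)
      (circleMeasure.prod (circleMeasure.prod circleMeasure)) :=
    (hf.comp_snd _).bdd_mul (c := 3)
      ((measurable_arcLenSum.div_const π).const_sub 3).aestronglyMeasurable
      (ae_of_all _ fun p => by
        have h := arcLenSum_mem_Ico p.1 p.2.1 p.2.2
        have h₀ : 0 ≤ arcLenSum p.1 p.2.1 p.2.2 / π := div_nonneg h.1 pi_pos.le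
        have h₆ : arcLenSum p.1 p.2.1 p.2.2 / π < 6 := by
          rw [div_lt_iff₀ pi_pos]; linarith [h.2]
        rw [Real.norm_eq_abs, abs_le]
        constructor <;> linarith)
  calc _ = ∫ p, (3 - arcLenSum p.1 p.2.1 p.2.2 / π) * f p.2
        ∂(circleMeasure.prod (circleMeasure.prod circleMeasure)) :=
        integral_congr_ae <| Measure.ae_pairwise_ne_prod_prod.mono
          fun p ⟨h₁, h₂, h₃⟩ => by simp only [eCocycle_eq_three_sub h₁ h₂ h₃]
    _ = ∫ q, ∫ a, (3 - arcLenSum a q.1 q.2 / π) * f q ∂circleMeasure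
          ∂(circleMeasure.prod circleMeasure) :=
        integral_prod_symm _ hΦ
    _ = _ := by
        congr with q
        rw [integral_mul_const,
          integral_sub (integrable_const 3) ((integrable_arcLenSum q.1 q.2).div_const π),
          integral_div, integral_const, integral_arcLenSum]
        simp only [probReal_univ, smul_eq_mul, one_mul]
        field_simp
        ring

theorem euler_primitive_formula_general (g₁ g₂ : ℝ → ℝ)
    (hc₁ : Continuous g₁) (hc₂ : Continuous g₂)
    (hz₁ : ∫ t in (0 : ℝ)..(2 * π), g₁ t = 0) (hz₂ : ∫ t in (0 : ℝ)..(2 * π), g₂ t = 0)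
    -- `G₁`, `G₂`, `F₁` are `g₁`, `g₂` and the primitive `F₁` regarded as functions on `S¹`
    (G₁ G₂ F₁ : Circle2pi → ℝ)
    (hG₁ : ∀ t : ℝ, G₁ (t : Circle2pi) = g₁ t) (hG₂ : ∀ t : ℝ, G₂ (t : Circle2pi) = g₂ t)
    (hF₁ : ∀ t : ℝ, F₁ (t : Circle2pi) = (1 / (2 * π)) * ∫ s in (0 : ℝ)..t, g₁ s) :
    (∫ p : Circle2pi × Circle2pi × Circle2pi,
        eCocycle p.1 p.2.1 p.2.2 * G₁ p.2.1 * G₂ p.2.2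
      ∂(circleMeasure.prod (circleMeasure.prod circleMeasure))
      = 2 * ∫ θ, F₁ θ * G₂ θ ∂circleMeasure) ∧
    (2 * ∫ θ, F₁ θ * G₂ θ ∂circleMeasure
      = (1 / π) * ∫ t in (0 : ℝ)..(2 * π),
          ((1 / (2 * π)) * ∫ s in (0 : ℝ)..t, g₁ s) * g₂ t) := by
  have hG₂c : Continuous G₂ := continuous_of_forall_coe_eq hc₂ hG₂
  have hG₂₀ : ∫ θ, G₂ θ ∂circleMeasure = 0 := by
    simp only [integral_haarAddCircle_eq_intervalIntegral_s15, hG₂, hz₂, mul_zero]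
  have hG₁G₂ : Integrable (fun q : Circle2pi × Circle2pi => G₁ q.1 * G₂ q.2)
      (circleMeasure.prod circleMeasure) :=
    ((continuous_of_forall_coe_eq hc₁ hG₁).fst'.mul hG₂c.snd').integrable_of_hasCompactSupport
      (.of_compactSpace _)
  refine ⟨?_, ?_⟩
  · calc ∫ p, eCocycle p.1 p.2.1 p.2.2 * G₁ p.2.1 * G₂ p.2.2
          ∂(circleMeasure.prod (circleMeasure.prod circleMeasure))
        = ∫ q, (1 - arcLen (q.2 - q.1) / π) * (G₁ q.1 * G₂ q.2)
            ∂(circleMeasure.prod circleMeasure) := by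
          simp only [mul_assoc]
          exact integral_eCocycle_mul _ hG₁G₂
      _ = (∫ θ, G₁ θ ∂circleMeasure) * (∫ θ, G₂ θ ∂circleMeasure) -
            π⁻¹ * ∫ q, arcLen (q.2 - q.1) * (G₁ q.1 * G₂ q.2)
              ∂(circleMeasure.prod circleMeasure) := by
          rw [← integral_prod_mul, ← integral_const_mul,
            ← integral_sub hG₁G₂ (hG₁G₂.arcLen_sub_mul.const_mul _)]
          congr with q
          ring
      _ = 2 * ∫ θ, F₁ θ * G₂ θ ∂circleMeasure := by
          rw [hG₂₀, integral_arcLen_sub_mul_mul hc₁ hz₁ hG₁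
            (by simpa only [one_div] using hF₁) hG₂c hG₂₀]
          field_simp
          ring
  · rw [integral_haarAddCircle_eq_intervalIntegral_s15]
    simp only [hF₁, hG₂]
    field_simp

/-- alternative expression of the form via primitives. -/
theorem euler_primitive_formula (g₁ g₂ : ℝ → ℝ)
    (hc₁ : Continuous g₁) (hc₂ : Continuous g₂)
    (hp₁ : Function.Periodic g₁ (2 * π)) (hp₂ : Function.Periodic g₂ (2 * π))
    (hz₁ : ∫ t in (0 : ℝ)..(2 * π), g₁ t = 0) (hz₂ : ∫ t in (0 : ℝ)..(2 * π), g₂ t = 0)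
    -- `G₁`, `G₂`, `F₁` are `g₁`, `g₂` and the primitive `F₁` regarded as functions on `S¹`
    (G₁ G₂ F₁ : Circle2pi → ℝ)
    (hG₁ : ∀ t : ℝ, G₁ (t : Circle2pi) = g₁ t) (hG₂ : ∀ t : ℝ, G₂ (t : Circle2pi) = g₂ t)
    (hF₁ : ∀ t : ℝ, F₁ (t : Circle2pi) = (1 / (2 * π)) * ∫ s in (0 : ℝ)..t, g₁ s) :
    (∫ p : Circle2pi × Circle2pi × Circle2pi,
        eCocycle p.1 p.2.1 p.2.2 * G₁ p.2.1 * G₂ p.2.2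
      ∂(circleMeasure.prod (circleMeasure.prod circleMeasure))
      = 2 * ∫ θ, F₁ θ * G₂ θ ∂circleMeasure) ∧
    (2 * ∫ θ, F₁ θ * G₂ θ ∂circleMeasure
      = (1 / π) * ∫ t in (0 : ℝ)..(2 * π),
          ((1 / (2 * π)) * ∫ s in (0 : ℝ)..t, g₁ s) * g₂ t) :=
  euler_primitive_formula_general g₁ g₂ hc₁ hc₂ hz₁ hz₂ G₁ G₂ F₁ hG₁ hG₂ hF₁
end
end

section
/- Let D = {x ∈ ℂ : |x| < 1} be the open unit disc and define Φ : D → L²(S¹, ℝ) by Φ(x) = (θ ↦ √((1 − |x|²)/|x − e^{iθ}|²)), where for each x ∈ D this function of θ is square-integrable on S¹. Then Φ(0) is the constant function 1, and Φ is Fréchet-differentiable at 0 (as a map from ℂ ≅ ℝ² to the Banach space L²(S¹, ℝ)) with derivative DΦ(0) given by DΦ(0)(u) = (θ ↦ (Re u) cos θ + (Im u) sin θ) for u ∈ ℂ. In particular, the tangent space at the constant function 1 of the image of the Poisson-kernel embedding is spanned by the functions θ ↦ cos θ and θ ↦ sin θ. -/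
open MeasureTheory Real
open scoped Real

noncomputable section

open Filter Topology Asymptotics
open scoped ENNReal

/-! For `‖ζ‖ = 1` and `t = Re (x ζ̄)` we have `‖x - ζ‖² = 1 - 2t + ‖x‖²` and `t² ≤ ‖x‖²`; expanding
`√((1 - ‖x‖²) / (1 - 2t + ‖x‖²))` around `x = 0` gives `1 + t + O(‖x‖²)` uniformly in `ζ`.
On the probability space `S¹` a uniform pointwise bound is an `L²` bound, so
`Φ x - Φ 0 - L x = O(‖x‖²)` with `L u = Re u · cos + Im u · sin`. -/

theorem abs_sqrt_sub_le_div {a b : ℝ} (ha : 0 ≤ a) (hb : 0 < b) :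
    |√a - b| ≤ |a - b ^ 2| / b := by
  rw [le_div_iff₀ hb]
  calc |√a - b| * b ≤ |√a - b| * (√a + b) := by gcongr; linarith [sqrt_nonneg a]
    _ = |a - b ^ 2| := by
      rw [← abs_of_nonneg (by positivity : 0 ≤ √a + b), ← abs_mul]
      congr 1
      linear_combination sq_sqrt ha

theorem abs_sqrt_poisson_sub_le {R t : ℝ} (htR : t ^ 2 ≤ R) (hR : R ≤ 1 / 4) :
    |√((1 - R) / (1 - 2 * t + R)) - (1 + t)| ≤ 64 * R := by
  obtain ⟨ht₁, ht₂⟩ : -(1 / 2) ≤ t ∧ t ≤ 1 / 2 := abs_le_of_sq_le_sq' (by nlinarith) (by norm_num)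
  have hD : 1 / 4 ≤ 1 - 2 * t + R := by nlinarith
  have hgap : (1 - R) / (1 - 2 * t + R) - (1 + t) ^ 2
      = (-2 * R + 3 * t ^ 2 - 2 * t * R + 2 * t ^ 3 - t ^ 2 * R) / (1 - 2 * t + R) := by
    field_simp; ring
  have hnum : |-2 * R + 3 * t ^ 2 - 2 * t * R + 2 * t ^ 3 - t ^ 2 * R| ≤ 8 * R := by
    rw [abs_le]; constructor <;> nlinarith
  calc |√((1 - R) / (1 - 2 * t + R)) - (1 + t)|
      ≤ |(1 - R) / (1 - 2 * t + R) - (1 + t) ^ 2| / (1 + t) :=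
        abs_sqrt_sub_le_div (div_nonneg (by linarith) (by linarith)) (by linarith)
    _ ≤ (8 * R / (1 / 4)) / (1 / 2) := by
        rw [hgap, abs_div, abs_of_pos (show (0 : ℝ) < 1 - 2 * t + R by linarith)]
        have hR₀ : 0 ≤ R := (sq_nonneg t).trans htR
        gcongr
        linarith
    _ = 64 * R := by ring

theorem abs_sqrt_poisson_sub_le_of_norm_eq_one {x ζ : ℂ} (hζ : ‖ζ‖ = 1) (hx : ‖x‖ ≤ 1 / 2) :
    |√((1 - ‖x‖ ^ 2) / ‖x - ζ‖ ^ 2) - (1 + (x.re * ζ.re + x.im * ζ.im))| ≤ 64 * ‖x‖ ^ 2 := by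
  have hζ' : ζ.re ^ 2 + ζ.im ^ 2 = 1 := by
    rw [← Complex.normSq_add_mul_I, ← Complex.sq_norm, Complex.re_add_im, hζ, one_pow]
  have hnorm : ‖x‖ ^ 2 = x.re ^ 2 + x.im ^ 2 := by
    rw [Complex.sq_norm, Complex.normSq_apply]; ring
  have hdist : ‖x - ζ‖ ^ 2 = 1 - 2 * (x.re * ζ.re + x.im * ζ.im) + ‖x‖ ^ 2 := by
    rw [Complex.sq_norm, Complex.normSq_apply, hnorm]
    simp only [Complex.sub_re, Complex.sub_im]
    linear_combination hζ'
  rw [hdist]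
  refine abs_sqrt_poisson_sub_le ?_ (by nlinarith [norm_nonneg x])
  rw [hnorm]
  nlinarith [sq_nonneg (x.re * ζ.im - x.im * ζ.re)]

theorem MeasureTheory.Lp.isBigO_of_ae_norm_le {α ι E : Type*} [MeasurableSpace α]
    {μ : Measure α} [IsFiniteMeasure μ] [NormedAddCommGroup E] {p : ℝ≥0∞} [Fact (1 ≤ p)]
    {l : Filter ι} {F : ι → Lp E p μ} {g : ι → ℝ} {C : ℝ} (hC : 0 ≤ C)
    (h : ∀ᶠ i in l, ∀ᵐ a ∂μ, ‖F i a‖ ≤ C * g i) : F =O[l] g := by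
  refine .of_bound (measureUnivNNReal μ ^ p.toReal⁻¹ * C) (h.mono fun i hi => ?_)
  have hi' : ∀ᵐ a ∂μ, ‖F i a‖ ≤ C * ‖g i‖ :=
    hi.mono fun a ha => ha.trans (by gcongr; exact le_abs_self _)
  exact (Lp.norm_le_of_ae_bound (by positivity) hi').trans_eq (by ring)

def firstHarmonic : ℂ →L[ℝ] C(Circle2pi, ℝ) :=
  Complex.reCLM.smulRight ⟨Real.Angle.cos, Real.Angle.continuous_cos⟩ +
    Complex.imCLM.smulRight ⟨Real.Angle.sin, Real.Angle.continuous_sin⟩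

theorem firstHarmonic_apply (u : ℂ) (θ : Circle2pi) :
    firstHarmonic u θ = u.re * Real.Angle.cos θ + u.im * Real.Angle.sin θ := rfl

/-- the Poisson-kernel embedding of the disc into `L²(S¹,ℝ)` sends `0`
to the constant function `1` and is Fréchet-differentiable at `0`, with derivative
`u ↦ (θ ↦ Re u · cos θ + Im u · sin θ)`. -/
theorem poisson_embedding_tangent_at_one (Φ : ℂ → Lp ℝ 2 circleMeasure)
    (hΦ : ∀ x : ℂ, ‖x‖ < 1 →
      (Φ x : Circle2pi → ℝ) =ᵐ[circleMeasure] fun θ : Circle2pi =>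
        Real.sqrt ((1 - ‖x‖ ^ 2) /
          ‖x - (Real.Angle.toCircle θ : ℂ)‖ ^ 2)) :
    ((Φ 0 : Circle2pi → ℝ) =ᵐ[circleMeasure] fun _ => 1) ∧
    ∃ L : ℂ →L[ℝ] Lp ℝ 2 circleMeasure, HasFDerivAt Φ L 0 ∧
      ∀ u : ℂ, (L u : Circle2pi → ℝ) =ᵐ[circleMeasure]
        fun θ : Circle2pi => u.re * Real.Angle.cos θ + u.im * Real.Angle.sin θ := by
  have h0 : (Φ 0 : Circle2pi → ℝ) =ᵐ[circleMeasure] fun _ => 1 := by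
    filter_upwards [hΦ 0 (by simp)] with θ hθ
    simp [hθ, Circle.norm_coe]
  set L := (ContinuousMap.toLp 2 circleMeasure ℝ).comp firstHarmonic
  have hL (u : ℂ) : (L u : Circle2pi → ℝ) =ᵐ[circleMeasure] firstHarmonic u :=
    ContinuousMap.coeFn_toLp circleMeasure _
  refine ⟨h0, L, ?_, hL⟩
  rw [hasFDerivAt_iff_isLittleO_nhds_zero]
  refine (Lp.isBigO_of_ae_norm_le (g := (‖·‖ ^ 2)) (C := 64) (by norm_num) ?_).trans_isLittleO
    (isLittleO_norm_pow_id one_lt_two)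
  filter_upwards [Metric.closedBall_mem_nhds (0 : ℂ) (by norm_num : (0 : ℝ) < 1 / 2)] with x hx
  rw [mem_closedBall_zero_iff] at hx
  rw [zero_add]
  filter_upwards [Lp.coeFn_sub (Φ x - Φ 0) (L x), Lp.coeFn_sub (Φ x) (Φ 0),
    hΦ x (by linarith), h0, hL x] with θ hsub hsub' hΦx hΦ0 hLx
  rw [hsub, Pi.sub_apply, hsub', Pi.sub_apply, hΦx, hΦ0, hLx, firstHarmonic_apply,
    Real.norm_eq_abs, sub_sub]
  simpa [Real.Angle.coe_toCircle (θ := θ)] using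
    abs_sqrt_poisson_sub_le_of_norm_eq_one (Circle.norm_coe (Real.Angle.toCircle θ)) hx
end
end
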